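/- arXiv:0806.2296 — 3 statements merged into one kernel-verified Lean document; each statement's English description precedes it below -/
import Mathlib

section
/- Let E < E₀ and ρ ∈ 𝓜. The functional φ ↦ 𝓖_E(ρ,φ) is strictly concave on 𝓕_E: for φ₁, φ₂ ∈ 𝓕_E with φ₁ ≠ φ₂ and t ∈ (0,1), the function tφ₁+(1−t)φ₂ belongs to 𝓕_E and 𝓖_E(ρ, tφ₁+(1−t)φ₂) > t 𝓖_E(ρ,φ₁) + (1−t) 𝓖_E(ρ,φ₂). -/
open Real MeasureTheory Set Filter Topology Function

noncomputable section

/-- Mobility `χ(a) = a(1−a)`. -/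
def chi (a : ℝ) : ℝ := a * (1 - a)

/-- The set `𝓜`: measurable density profiles on `[−1,1]` with values in `[0,1]`. -/
def memM (ρ : ℝ → ℝ) : Prop :=
  Measurable ρ ∧ ∀ u ∈ Set.Icc (-1:ℝ) 1, ρ u ∈ Set.Icc (0:ℝ) 1

/-- `φ ∈ 𝓕_E`, with explicit derivative function `d`: `φ` is `C¹` on `[−1,1]` with
Lipschitz derivative `d`, `φ(−1) = φ₋`, `φ(1) = φ₊`, and `d > max 0 E` on `[−1,1]`. -/
def memF (φm φp E : ℝ) (φ d : ℝ → ℝ) : Prop :=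
  (∀ u ∈ Set.Icc (-1:ℝ) 1, HasDerivWithinAt φ (d u) (Set.Icc (-1:ℝ) 1) u) ∧
  (∃ L : NNReal, LipschitzOnWith L d (Set.Icc (-1:ℝ) 1)) ∧
  φ (-1) = φm ∧ φ 1 = φp ∧
  (∀ u ∈ Set.Icc (-1:ℝ) 1, max 0 E < d u)

/-- The functional `𝓖_E(ρ,φ)` (with `d = φ'`), including the `E = 0` case.
Recall the convention `0 log 0 = 0` (in Lean `Real.log 0 = 0`). -/
def GEint (E A : ℝ) (ρ φ d : ℝ → ℝ) : ℝ :=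
  ∫ u in (-1:ℝ)..1,
    (ρ u * Real.log (ρ u) + (1 - ρ u) * Real.log (1 - ρ u)
      + (1 - ρ u) * φ u - Real.log (1 + Real.exp (φ u))
      + (if E = 0 then Real.log (d u) + 1
         else E⁻¹ * (d u * Real.log (d u) - (d u - E) * Real.log (d u - E)))
      - A)

/-!
Strict concavity is pointwise. The terms of the integrand involving `ρ` do not depend on `φ`,
`(1 - ρ) φ` is linear, `-log (1 + e^φ)` is strictly concave since its derivative is minus the
sigmoid, and the `φ'`-term is strictly concave on `(max 0 E, ∞)`, its second derivative being
`-1/(x (x - E))` (`-1/x²` for `E = 0`). Hence the integrand at the convex combination exceeds the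
convex combination of the integrands by a continuous nonnegative gap, which is positive wherever
`φ₁ ≠ φ₂`; integrating over `[-1, 1]` gives the strict inequality.
-/

lemma strictConcaveOn_of_hasDerivAt2_neg {D : Set ℝ} (hD : Convex ℝ D) (hDo : IsOpen D)
    {f f' f'' : ℝ → ℝ} (hf : ∀ x ∈ D, HasDerivAt f (f' x) x)
    (hf' : ∀ x ∈ D, HasDerivAt f' (f'' x) x) (hf'' : ∀ x ∈ D, f'' x < 0) :
    StrictConcaveOn ℝ D f := by
  have hanti : StrictAntiOn f' D :=
    strictAntiOn_of_hasDerivWithinAt_neg hD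
      (fun x hx => (hf' x hx).continuousAt.continuousWithinAt)
      (by rw [hDo.interior_eq]; exact fun x hx => (hf' x hx).hasDerivWithinAt)
      (by rwa [hDo.interior_eq])
  refine StrictAntiOn.strictConcaveOn_of_deriv hD
    (fun x hx => (hf x hx).continuousAt.continuousWithinAt) ?_
  rw [hDo.interior_eq]
  intro x hx y hy hxy
  rw [(hf x hx).deriv, (hf y hy).deriv]
  exact hanti hx hy hxy

def softplus (x : ℝ) : ℝ := Real.log (1 + Real.exp x)

lemma hasDerivAt_softplus (x : ℝ) : HasDerivAt softplus (sigmoid x) x := by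
  have hpos : 0 < 1 + Real.exp x := by positivity
  refine (((Real.hasDerivAt_exp x).const_add 1).log hpos.ne').congr_deriv ?_
  rw [sigmoid_def, Real.exp_neg]
  field_simp
  ring

lemma continuous_softplus : Continuous softplus :=
  continuous_iff_continuousAt.2 fun x => (hasDerivAt_softplus x).continuousAt

lemma strictConvexOn_softplus : StrictConvexOn ℝ univ softplus :=
  StrictMono.strictConvexOn_univ_of_deriv continuous_softplus
    (by rw [funext fun x => (hasDerivAt_softplus x).deriv]; exact sigmoid_strictMono)

def gradTerm (E x : ℝ) : ℝ :=
  if E = 0 then Real.log x + 1 else E⁻¹ * (x * Real.log x - (x - E) * Real.log (x - E))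

lemma strictConcaveOn_gradTerm (E : ℝ) : StrictConcaveOn ℝ (Ioi (max 0 E)) (gradTerm E) := by
  rcases eq_or_ne E 0 with rfl | hE
  · have h : gradTerm 0 = fun x => Real.log x + 1 := funext fun x => if_pos rfl
    rw [h, max_self]
    exact strictConcaveOn_log_Ioi.add_const 1
  have hpos : ∀ x ∈ Ioi (max 0 E), 0 < x ∧ 0 < x - E := fun x hx =>
    ⟨(le_max_left 0 E).trans_lt hx, sub_pos.2 ((le_max_right 0 E).trans_lt hx)⟩
  refine strictConcaveOn_of_hasDerivAt2_neg (convex_Ioi _) isOpen_Ioi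
    (f' := fun x => E⁻¹ * (Real.log x - Real.log (x - E)))
    (f'' := fun x => -(x * (x - E))⁻¹) (fun x hx => ?_) (fun x hx => ?_) (fun x hx => ?_)
  · obtain ⟨hx, hxE⟩ := hpos x hx
    have hshift : HasDerivAt (fun y => (y - E) * Real.log (y - E)) (Real.log (x - E) + 1) x := by
      simpa [Function.comp_def] using
        (Real.hasDerivAt_mul_log hxE.ne').comp x ((hasDerivAt_id x).sub_const E)
    rw [show gradTerm E = _ from funext fun y => if_neg hE]
    refine (((Real.hasDerivAt_mul_log hx.ne').sub hshift).const_mul E⁻¹).congr_deriv ?_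
    ring
  · obtain ⟨hx, hxE⟩ := hpos x hx
    have hshift : HasDerivAt (fun y => Real.log (y - E)) (x - E)⁻¹ x := by
      simpa [Function.comp_def] using
        (Real.hasDerivAt_log hxE.ne').comp x ((hasDerivAt_id x).sub_const E)
    refine (((Real.hasDerivAt_log hx.ne').sub hshift).const_mul E⁻¹).congr_deriv ?_
    field_simp
    ring
  · obtain ⟨hx, hxE⟩ := hpos x hx
    simp only [Left.neg_neg_iff]
    positivity

def concavityGap (f : ℝ → ℝ) (t a b : ℝ) : ℝ :=
  f (t * a + (1 - t) * b) - (t * f a + (1 - t) * f b)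

section concavityGap

variable {s : Set ℝ} {f : ℝ → ℝ} {t a b : ℝ}

lemma ConcaveOn.concavityGap_nonneg (hf : ConcaveOn ℝ s f) (ha : a ∈ s) (hb : b ∈ s)
    (ht0 : 0 ≤ t) (ht1 : t ≤ 1) : 0 ≤ concavityGap f t a b :=
  sub_nonneg.2 (hf.2 ha hb ht0 (sub_nonneg.2 ht1) (add_sub_cancel t 1))

lemma StrictConcaveOn.concavityGap_pos (hf : StrictConcaveOn ℝ s f) (ha : a ∈ s) (hb : b ∈ s)
    (hab : a ≠ b) (ht0 : 0 < t) (ht1 : t < 1) : 0 < concavityGap f t a b :=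
  sub_pos.2 (hf.2 ha hb hab ht0 (sub_pos.2 ht1) (add_sub_cancel t 1))

end concavityGap

lemma intervalIntegrable_comp_of_mapsTo {h ρ : ℝ → ℝ} {a b : ℝ} {K : Set ℝ} (hK : IsCompact K)
    (hh : Continuous h) (hρ : Measurable ρ) (hρK : MapsTo ρ (uIoc a b) K) :
    IntervalIntegrable (fun u => h (ρ u)) volume a b := by
  obtain ⟨M, hM⟩ := hK.exists_bound_of_continuousOn hh.continuousOn
  rw [intervalIntegrable_iff]
  exact Measure.integrableOn_of_bounded measure_Ioc_lt_top.ne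
    (hh.measurable.comp hρ).aestronglyMeasurable
    ((ae_restrict_mem measurableSet_uIoc).mono fun u hu => hM _ (hρK hu))

namespace memF

variable {φm φp E : ℝ} {φ d φ1 d1 φ2 d2 : ℝ → ℝ}

lemma continuousOn (hF : memF φm φp E φ d) : ContinuousOn φ (Icc (-1) 1) :=
  fun u hu => (hF.1 u hu).continuousWithinAt

lemma continuousOn_gradTerm (hF : memF φm φp E φ d) :
    ContinuousOn (fun u => gradTerm E (d u)) (Icc (-1) 1) := by
  obtain ⟨-, ⟨L, hL⟩, -, -, hd⟩ := hF
  exact ((strictConcaveOn_gradTerm E).concaveOn.continuousOn isOpen_Ioi).comp hL.continuousOn hd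

lemma convexComb (h1F : memF φm φp E φ1 d1) (h2F : memF φm φp E φ2 d2) {t : ℝ}
    (ht0 : 0 ≤ t) (ht1 : t ≤ 1) :
    memF φm φp E (fun u => t * φ1 u + (1 - t) * φ2 u) (fun u => t * d1 u + (1 - t) * d2 u) := by
  obtain ⟨hD1, ⟨L1, hL1⟩, hm1, hp1, hd1⟩ := h1F
  obtain ⟨hD2, ⟨L2, hL2⟩, hm2, hp2, hd2⟩ := h2F
  refine ⟨fun u hu => ((hD1 u hu).const_mul t).add ((hD2 u hu).const_mul (1 - t)),
    ⟨_, ((lipschitzWith_smul t).comp_lipschitzOnWith hL1).add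
      ((lipschitzWith_smul (1 - t)).comp_lipschitzOnWith hL2)⟩, ?_, ?_,
    fun u hu => convex_Ioi (max 0 E) (hd1 u hu) (hd2 u hu) ht0 (sub_nonneg.2 ht1) (by ring)⟩
  · simp only [hm1, hm2]; ring
  · simp only [hp1, hp2]; ring

end memF

def GEintegrand (E A : ℝ) (ρ φ d : ℝ → ℝ) (u : ℝ) : ℝ :=
  ρ u * Real.log (ρ u) + (1 - ρ u) * Real.log (1 - ρ u) + (1 - ρ u) * φ u - softplus (φ u)
    + gradTerm E (d u) - A

lemma GEint_eq_integral_GEintegrand (E A : ℝ) (ρ φ d : ℝ → ℝ) :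
    GEint E A ρ φ d = ∫ u in (-1:ℝ)..1, GEintegrand E A ρ φ d u := rfl

lemma intervalIntegrable_GEintegrand {φm φp E A : ℝ} {ρ φ d : ℝ → ℝ} (hρ : memM ρ)
    (hF : memF φm φp E φ d) : IntervalIntegrable (GEintegrand E A ρ φ d) volume (-1) 1 := by
  have hIcc : uIcc (-1 : ℝ) 1 = Icc (-1) 1 := uIcc_of_le (by norm_num)
  have hρI : MapsTo ρ (uIoc (-1) 1) (Icc 0 1) := fun u hu =>
    hρ.2 u (hIcc ▸ uIoc_subset_uIcc hu)
  have hent := intervalIntegrable_comp_of_mapsTo isCompact_Icc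
    (h := fun x => x * Real.log x + (1 - x) * Real.log (1 - x)) (by fun_prop) hρ.1 hρI
  have hlin := (intervalIntegrable_comp_of_mapsTo isCompact_Icc (h := fun x => 1 - x)
    (by fun_prop) hρ.1 hρI).mul_continuousOn (hIcc ▸ hF.continuousOn)
  have hrest : ContinuousOn (fun u => gradTerm E (d u) - softplus (φ u) - A) (uIcc (-1) 1) :=
    hIcc ▸ (hF.continuousOn_gradTerm.sub
      (continuous_softplus.comp_continuousOn hF.continuousOn)).sub continuousOn_const
  convert (hent.add hlin).add hrest.intervalIntegrable using 1
  funext u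
  simp only [GEintegrand]
  ring

def GEgap (E t : ℝ) (φ1 d1 φ2 d2 : ℝ → ℝ) (u : ℝ) : ℝ :=
  concavityGap (-softplus) t (φ1 u) (φ2 u) + concavityGap (gradTerm E) t (d1 u) (d2 u)

lemma GEintegrand_convexComb (E A t : ℝ) (ρ φ1 d1 φ2 d2 : ℝ → ℝ) (u : ℝ) :
    GEintegrand E A ρ (fun u => t * φ1 u + (1 - t) * φ2 u) (fun u => t * d1 u + (1 - t) * d2 u) u
      = t * GEintegrand E A ρ φ1 d1 u + (1 - t) * GEintegrand E A ρ φ2 d2 u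
        + GEgap E t φ1 d1 φ2 d2 u := by
  simp only [GEintegrand, GEgap, concavityGap, Pi.neg_apply]
  ring

lemma integral_GEgap_pos {φm φp E t : ℝ} {φ1 d1 φ2 d2 : ℝ → ℝ}
    (h1F : memF φm φp E φ1 d1) (h2F : memF φm φp E φ2 d2)
    (hne : ¬ EqOn φ1 φ2 (Icc (-1) 1)) (ht0 : 0 < t) (ht1 : t < 1) :
    0 < ∫ u in (-1:ℝ)..1, GEgap E t φ1 d1 φ2 d2 u := by
  obtain ⟨u0, hu0, hne0⟩ : ∃ u ∈ Icc (-1 : ℝ) 1, φ1 u ≠ φ2 u := by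
    simpa [EqOn, and_assoc] using hne
  have hsoft := strictConvexOn_softplus.neg
  have hgrad : ∀ u ∈ Icc (-1 : ℝ) 1, 0 ≤ concavityGap (gradTerm E) t (d1 u) (d2 u) :=
    fun u hu => (strictConcaveOn_gradTerm E).concaveOn.concavityGap_nonneg
      (h1F.2.2.2.2 u hu) (h2F.2.2.2.2 u hu) ht0.le ht1.le
  have hcont : ContinuousOn (GEgap E t φ1 d1 φ2 d2) (Icc (-1) 1) := by
    have hs1 := continuous_softplus.comp_continuousOn h1F.continuousOn
    have hs2 := continuous_softplus.comp_continuousOn h2F.continuousOn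
    have hFt := h1F.convexComb h2F ht0.le ht1.le
    have hst := continuous_softplus.comp_continuousOn hFt.continuousOn
    have hg1 := h1F.continuousOn_gradTerm
    have hg2 := h2F.continuousOn_gradTerm
    have hgt := hFt.continuousOn_gradTerm
    show ContinuousOn (fun u => GEgap E t φ1 d1 φ2 d2 u) _
    simp only [GEgap, concavityGap, Pi.neg_apply]
    fun_prop
  simpa using intervalIntegral.integral_lt_integral_of_continuousOn_of_le_of_exists_lt
    (by norm_num) continuousOn_const hcont
    (fun u hu => add_nonneg (hsoft.concaveOn.concavityGap_nonneg trivial trivial ht0.le ht1.le)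
      (hgrad u (Ioc_subset_Icc_self hu)))
    ⟨u0, hu0, add_pos_of_pos_of_nonneg
      (hsoft.concavityGap_pos trivial trivial hne0 ht0 ht1) (hgrad u0 hu0)⟩

theorem stmt8_general (φm φp : ℝ)
    (E A : ℝ)
    (ρ : ℝ → ℝ) (hρ : memM ρ)
    (φ1 d1 φ2 d2 : ℝ → ℝ)
    (h1F : memF φm φp E φ1 d1) (h2F : memF φm φp E φ2 d2)
    (hne : ¬ Set.EqOn φ1 φ2 (Set.Icc (-1:ℝ) 1))
    (t : ℝ) (ht : t ∈ Set.Ioo (0:ℝ) 1) :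
    memF φm φp E (fun u => t * φ1 u + (1 - t) * φ2 u)
      (fun u => t * d1 u + (1 - t) * d2 u) ∧
    t * GEint E A ρ φ1 d1 + (1 - t) * GEint E A ρ φ2 d2 <
      GEint E A ρ (fun u => t * φ1 u + (1 - t) * φ2 u)
        (fun u => t * d1 u + (1 - t) * d2 u) := by
  obtain ⟨ht0, ht1⟩ := ht
  refine ⟨h1F.convexComb h2F ht0.le ht1.le, ?_⟩
  have hI1 := (intervalIntegrable_GEintegrand (A := A) hρ h1F).const_mul t
  have hI2 := (intervalIntegrable_GEintegrand (A := A) hρ h2F).const_mul (1 - t)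
  have hgap := integral_GEgap_pos h1F h2F hne ht0 ht1
  have hsplit : GEint E A ρ (fun u => t * φ1 u + (1 - t) * φ2 u)
      (fun u => t * d1 u + (1 - t) * d2 u)
      = t * GEint E A ρ φ1 d1 + (1 - t) * GEint E A ρ φ2 d2
        + ∫ u in (-1:ℝ)..1, GEgap E t φ1 d1 φ2 d2 u := by
    simp only [GEint_eq_integral_GEintegrand, GEintegrand_convexComb]
    -- the gap is integrable since its integral is nonzero (non-integrable functions integrate to 0)
    rw [intervalIntegral.integral_add (hI1.add hI2)
      (intervalIntegral.intervalIntegrable_of_integral_ne_zero hgap.ne'),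
      intervalIntegral.integral_add hI1 hI2, intervalIntegral.integral_const_mul,
      intervalIntegral.integral_const_mul]
  linarith

/-- Strict concavity of `φ ↦ 𝓖_E(ρ,φ)` on `𝓕_E`. -/
theorem stmt8 (ρm ρp φm φp E0 : ℝ)
    (h0 : 0 < ρm) (h1 : ρm < ρp) (h2 : ρp < 1)
    (hφm : φm = Real.log (ρm / (1 - ρm))) (hφp : φp = Real.log (ρp / (1 - ρp)))
    (hE0 : E0 = (φp - φm) / 2) (E J A : ℝ) (hE : E < E0)
    (hJneg : J ≤ 0) (hJeq : (1/2) * (∫ r in ρm..ρp, (E * chi r - J)⁻¹) = 1)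
    (hA : A = if E = 0 then Real.log ((ρp - ρm) / 2) + 1
      else Real.log (-J) + (1/2) * ∫ r in ρm..ρp, (E * chi r)⁻¹ * Real.log (1 - E * chi r / J))
    (ρ : ℝ → ℝ) (hρ : memM ρ)
    (φ1 d1 φ2 d2 : ℝ → ℝ)
    (h1F : memF φm φp E φ1 d1) (h2F : memF φm φp E φ2 d2)
    (hne : ¬ Set.EqOn φ1 φ2 (Set.Icc (-1:ℝ) 1))
    (t : ℝ) (ht : t ∈ Set.Ioo (0:ℝ) 1) :
    memF φm φp E (fun u => t * φ1 u + (1 - t) * φ2 u)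
      (fun u => t * d1 u + (1 - t) * d2 u) ∧
    t * GEint E A ρ φ1 d1 + (1 - t) * GEint E A ρ φ2 d2 <
      GEint E A ρ (fun u => t * φ1 u + (1 - t) * φ2 u)
        (fun u => t * d1 u + (1 - t) * d2 u) :=
  stmt8_general φm φp E A ρ hρ φ1 d1 φ2 d2 h1F h2F hne t ht

end
end

section
/- Let E < E₀, T > 0, ε ∈ (0,1/2), and let π : [0,T]×[−1,1] → ℝ be smooth (C^∞ in both variables) with π_t(−1) = ρ₋, π_t(1) = ρ₊ and ε ≤ π ≤ 1−ε. Define Γ_t := log(π_t/(1−π_t)) − Φ(π_t). Then S_E(π_T) − S_E(π_0) = ∫_0^T ∫_{−1}^{1} Γ_t(u) ∂_tπ_t(u) du dt. -/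
open Real MeasureTheory Set Filter Topology Function

noncomputable section

/-- The Euler–Lagrange equation `φ''/(φ'(φ'−E)) + 1/(1+e^φ) = ρ` holds Lebesgue-a.e.
on `(−1,1)`, where `d = φ'`. -/
def solvesEL (E : ℝ) (ρ φ d : ℝ → ℝ) : Prop :=
  ∀ᵐ u ∂(volume : Measure ℝ), u ∈ Set.Ioo (-1:ℝ) 1 →
    ∃ d2 : ℝ, HasDerivAt d d2 u ∧
      d2 / (d u * (d u - E)) + 1 / (1 + Real.exp (φ u)) = ρ u

/-- `S_E(ρ) = sup_{φ ∈ 𝓕_E} 𝓖_E(ρ,φ)`. -/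
def SE (φm φp E A : ℝ) (ρ : ℝ → ℝ) : ℝ :=
  sSup { x | ∃ φ d : ℝ → ℝ, memF φm φp E φ d ∧ x = GEint E A ρ φ d }


lemma slope_seq_tendsto {F : ℝ → ℝ} {c L : ℝ} (hF : HasDerivAt F L c) :
    Tendsto (fun n : ℕ => (F (c + 1/(n+1)) - F c) * (n+1)) atTop (𝓝 L) := by
  have hs := hasDerivAt_iff_tendsto_slope.1 hF
  have hseq : Tendsto (fun n : ℕ => c + 1/(n+1)) atTop (𝓝[≠] c) := by
    apply tendsto_nhdsWithin_of_tendsto_nhds_of_eventually_within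
    · have := tendsto_one_div_add_atTop_nhds_zero_nat (𝕜 := ℝ)
      simpa using (tendsto_const_nhds (x := c)).add this
    · filter_upwards with n
      have : (0:ℝ) < 1/(n+1) := by positivity
      simp only [mem_compl_iff, mem_singleton_iff]
      intro h; nlinarith [congrArg (fun x => x - c) h]
  have := hs.comp hseq
  convert this using 2 with n
  simp only [comp_apply, slope_def_field, div_eq_inv_mul]
  field_simp
  ring

lemma lipschitz_ftc {f g : ℝ → ℝ} {K : NNReal} (hf : LipschitzWith K f)
    {a b : ℝ} (hab : a ≤ b)
    (hg : ∀ᵐ x ∂(volume : Measure ℝ), x ∈ Set.Ioo a b → HasDerivAt f (g x) x)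
    (hgm : AEStronglyMeasurable g (volume.restrict (Set.Ioo a b))) :
    ∫ x in a..b, g x = f b - f a := by
  have hfc : Continuous f := hf.continuous
  have hint : ∀ c d : ℝ, IntervalIntegrable f volume c d :=
    fun c d => hfc.intervalIntegrable c d
  set q : ℕ → ℝ → ℝ := fun n x => (f (x + 1/(n+1)) - f x) * (n+1) with hq
  -- value of ∫ q n
  have hval : ∀ n : ℕ, ∫ x in a..b, q n x =
      ((∫ x in b..(b + 1/(n+1)), f x) - (∫ x in a..(a + 1/(n+1)), f x)) * ((n:ℝ)+1) := by
    intro n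
    have hc : Continuous fun x : ℝ => f (x + 1/(n+1)) := hfc.comp (by continuity)
    have h1 : ∫ x in a..b, q n x
        = ((∫ x in a..b, f (x + 1/(n+1))) - ∫ x in a..b, f x) * ((n:ℝ)+1) := by
      rw [← intervalIntegral.integral_sub (hc.intervalIntegrable a b) (hint a b),
        ← intervalIntegral.integral_mul_const]
    rw [h1, intervalIntegral.integral_comp_add_right f (1/(n+1))]
    congr 1
    have e1 : (∫ x in a..(b + 1/(n+1)), f x) = (∫ x in a..b, f x) + ∫ x in b..(b+1/(n+1)), f x :=
      (intervalIntegral.integral_add_adjacent_intervals (hint a b) (hint _ _)).symm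
    have e2 : (∫ x in a..(b + 1/(n+1)), f x)
        = (∫ x in a..(a+1/(n+1)), f x) + ∫ x in (a+1/(n+1))..(b+1/(n+1)), f x :=
      (intervalIntegral.integral_add_adjacent_intervals (hint _ _) (hint _ _)).symm
    linarith [e1.symm.trans e2]
  -- limit of the RHS values
  have hlim2 : Tendsto (fun n : ℕ => ∫ x in a..b, q n x) atTop (𝓝 (f b - f a)) := by
    have hFb : HasDerivAt (fun y => ∫ x in b..y, f x) (f b) b :=
      intervalIntegral.integral_hasDerivAt_right (hint b b)
        (hfc.stronglyMeasurableAtFilter _ _) hfc.continuousAt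
    have hFa : HasDerivAt (fun y => ∫ x in a..y, f x) (f a) a :=
      intervalIntegral.integral_hasDerivAt_right (hint a a)
        (hfc.stronglyMeasurableAtFilter _ _) hfc.continuousAt
    have tb := slope_seq_tendsto hFb
    have ta := slope_seq_tendsto hFa
    simp only [intervalIntegral.integral_same, sub_zero] at tb ta
    have := tb.sub ta
    apply Tendsto.congr' _ this
    filter_upwards with n
    rw [hval n]; ring
  -- limit of ∫ q n is ∫ g by dominated convergence
  have hlim1 : Tendsto (fun n : ℕ => ∫ x in a..b, q n x) atTop (𝓝 (∫ x in a..b, g x)) := by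
    apply intervalIntegral.tendsto_integral_filter_of_dominated_convergence (fun _ => (K:ℝ))
    · filter_upwards with n
      exact ((hfc.comp (by continuity)).sub hfc).mul continuous_const |>.aestronglyMeasurable.restrict
    · filter_upwards with n
      filter_upwards with x _hx
      have : |f (x + 1/(n+1)) - f x| ≤ K * |(x + 1/(n+1)) - x| := by
        have := hf.dist_le_mul (x + 1/(n+1)) x
        simpa [Real.dist_eq, abs_inv, abs_abs] using this
      have h2 : |(x + 1/(n+1)) - x| = 1/((n:ℝ)+1) := by
        rw [add_sub_cancel_left, abs_of_pos]; positivity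
      rw [h2] at this
      have hn : (0:ℝ) < (n:ℝ)+1 := by positivity
      simp only [hq, Real.norm_eq_abs, abs_mul]
      rw [abs_of_pos hn]
      calc |f (x + 1/(n+1)) - f x| * ((n:ℝ)+1) ≤ (K * (1/((n:ℝ)+1))) * ((n:ℝ)+1) := by
            apply mul_le_mul_of_nonneg_right this (le_of_lt hn)
        _ = K := by field_simp
    · exact intervalIntegrable_const
    · rw [uIoc_of_le hab]
      have hb : ∀ᵐ x ∂(volume : Measure ℝ), x ≠ b := by
        have : (volume : Measure ℝ) {b} = 0 := volume_singleton
        filter_upwards [measure_eq_zero_iff_ae_notMem.1 this] with x hx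
        simpa using hx
      have : ∀ᵐ x ∂(volume : Measure ℝ), x ∈ Set.Ioc a b → Tendsto (fun n : ℕ => q n x) atTop (𝓝 (g x)) := by
        filter_upwards [hg, hb] with x hx hxb hmem
        exact slope_seq_tendsto (hx ⟨hmem.1, lt_of_le_of_ne hmem.2 hxb⟩)
      exact this
  have := tendsto_nhds_unique hlim1 hlim2
  linarith [this]


/-- Tangent line inequality for a function with antitone (continuous) derivative on a convex set. -/
lemma concave_tangent_le {s : Set ℝ} (hs : Convex ℝ s) {k dk : ℝ → ℝ}
    (hd : ∀ x ∈ s, HasDerivAt k (dk x) x) (hdc : ContinuousOn dk s)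
    (hanti : ∀ x ∈ s, ∀ y ∈ s, x ≤ y → dk y ≤ dk x)
    {x y : ℝ} (hx : x ∈ s) (hy : y ∈ s) :
    k y ≤ k x + dk x * (y - x) := by
  rcases le_total x y with h | h
  · have hsub : Set.uIcc x y ⊆ s := by
      rw [uIcc_of_le h]; exact hs.ordConnected.out hx hy
    have hint : IntervalIntegrable dk volume x y :=
      (hdc.mono hsub).intervalIntegrable
    have hftc : ∫ u in x..y, dk u = k y - k x :=
      intervalIntegral.integral_eq_sub_of_hasDerivAt (fun u hu => hd u (hsub hu)) hint
    have hmono : ∫ u in x..y, dk u ≤ ∫ u in x..y, dk x := by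
      apply intervalIntegral.integral_mono_on h hint intervalIntegrable_const
      intro u hu
      exact hanti x hx u (hsub (by rw [uIcc_of_le h]; exact hu)) hu.1
    rw [hftc] at hmono
    rw [intervalIntegral.integral_const, smul_eq_mul] at hmono
    nlinarith
  · have hsub : Set.uIcc y x ⊆ s := by
      rw [uIcc_of_le h]; exact hs.ordConnected.out hy hx
    have hint : IntervalIntegrable dk volume y x :=
      (hdc.mono hsub).intervalIntegrable
    have hftc : ∫ u in y..x, dk u = k x - k y :=
      intervalIntegral.integral_eq_sub_of_hasDerivAt (fun u hu => hd u (hsub hu)) hint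
    have hmono : ∫ u in y..x, dk x ≤ ∫ u in y..x, dk u := by
      apply intervalIntegral.integral_mono_on h intervalIntegrable_const hint
      intro u hu
      exact hanti u (hsub (by rw [uIcc_of_le h]; exact hu)) x hx hu.2
    rw [hftc] at hmono
    rw [intervalIntegral.integral_const, smul_eq_mul] at hmono
    nlinarith


def kay (ρ v : ℝ) : ℝ := (1 - ρ) * v - Real.log (1 + Real.exp v)

def fE (E d : ℝ) : ℝ :=
  if E = 0 then Real.log d + 1 else E⁻¹ * (d * Real.log d - (d - E) * Real.log (d - E))

def dfE (E d : ℝ) : ℝ := if E = 0 then d⁻¹ else E⁻¹ * (Real.log d - Real.log (d - E))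

def Hent (r : ℝ) : ℝ := r * Real.log r + (1 - r) * Real.log (1 - r)

lemma one_add_exp_pos (v : ℝ) : (0:ℝ) < 1 + Real.exp v := by positivity

lemma hasDerivAt_kay (ρ v : ℝ) : HasDerivAt (kay ρ) (1/(1 + Real.exp v) - ρ) v := by
  have h1 : HasDerivAt (fun v : ℝ => (1 - ρ) * v) (1 - ρ) v := by
    simpa using (hasDerivAt_id v).const_mul (1 - ρ)
  have h2 : HasDerivAt (fun v : ℝ => Real.log (1 + Real.exp v))
      (Real.exp v / (1 + Real.exp v)) v := by
    have h3 : HasDerivAt (fun v : ℝ => 1 + Real.exp v) (Real.exp v) v :=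
      (Real.hasDerivAt_exp v).const_add 1
    simpa using (h3.log (ne_of_gt (one_add_exp_pos v)))
  have := h1.sub h2
  refine this.congr_deriv ?_
  have hpos := one_add_exp_pos v
  field_simp
  ring

lemma kay_antitone_deriv (ρ : ℝ) {v w : ℝ} (h : v ≤ w) :
    1/(1 + Real.exp w) - ρ ≤ 1/(1 + Real.exp v) - ρ := by
  have := Real.exp_le_exp.2 h
  have h1 := one_add_exp_pos v
  have h2 := one_add_exp_pos w
  have : 1/(1 + Real.exp w) ≤ 1/(1 + Real.exp v) := by
    apply one_div_le_one_div_of_le h1; linarith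
  linarith

lemma kay_tangent (ρ v w : ℝ) :
    kay ρ w ≤ kay ρ v + (1/(1 + Real.exp v) - ρ) * (w - v) := by
  apply concave_tangent_le (s := Set.univ) convex_univ
    (fun x _ => hasDerivAt_kay ρ x) _ _ (mem_univ v) (mem_univ w)
  · apply Continuous.continuousOn
    apply Continuous.sub _ continuous_const
    exact continuous_const.div (by continuity) (fun x => ne_of_gt (one_add_exp_pos x))
  · intro x _ y _ hxy
    exact kay_antitone_deriv ρ hxy

lemma dom_fE {E d : ℝ} (h : max 0 E < d) : 0 < d ∧ 0 < d - E := by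
  constructor
  · exact lt_of_le_of_lt (le_max_left 0 E) h
  · have := lt_of_le_of_lt (le_max_right 0 E) h; linarith

lemma hasDerivAt_fE {E d : ℝ} (h : max 0 E < d) : HasDerivAt (fE E) (dfE E d) d := by
  obtain ⟨hd0, hdE⟩ := dom_fE h
  by_cases hE : E = 0
  · subst hE
    have e1 : fE 0 = fun d => Real.log d + 1 := by funext x; simp [fE]
    have e2 : dfE 0 d = d⁻¹ := by simp [dfE]
    rw [e1, e2]
    simpa [one_div] using (Real.hasDerivAt_log (ne_of_gt hd0)).add_const 1
  · have e1 : fE E = fun d => E⁻¹ * (d * Real.log d - (d - E) * Real.log (d - E)) := by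
      funext x; simp [fE, hE]
    have e2 : dfE E d = E⁻¹ * (Real.log d - Real.log (d - E)) := by simp [dfE, hE]
    rw [e1, e2]
    have h1 : HasDerivAt (fun d : ℝ => d * Real.log d) (Real.log d + 1) d := by
      have := (hasDerivAt_id d).mul (Real.hasDerivAt_log (ne_of_gt hd0))
      refine this.congr_deriv ?_
      field_simp
      simp only [id]
      ring
    have h2 : HasDerivAt (fun x : ℝ => (x - E) * Real.log (x - E)) (Real.log (d - E) + 1) d := by
      have hs : HasDerivAt (fun x : ℝ => x - E) 1 d := (hasDerivAt_id d).sub_const E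
      have h3 : HasDerivAt (fun y : ℝ => y * Real.log y) (Real.log (d - E) + 1) (d - E) := by
        have := (hasDerivAt_id (d-E)).mul (Real.hasDerivAt_log (ne_of_gt hdE))
        refine this.congr_deriv ?_
        field_simp
        simp only [id]
        ring
      have := h3.comp d hs
      exact this.congr_deriv (mul_one _)
    have := (h1.sub h2).const_mul E⁻¹
    refine this.congr_deriv ?_
    ring

lemma hasDerivAt_dfE {E d : ℝ} (h : max 0 E < d) :
    HasDerivAt (dfE E) (-(d * (d - E))⁻¹) d := by
  obtain ⟨hd0, hdE⟩ := dom_fE h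
  by_cases hE : E = 0
  · subst hE
    have e2 : dfE 0 = fun d => d⁻¹ := by funext x; simp [dfE]
    rw [e2]
    have := hasDerivAt_inv (ne_of_gt hd0)
    refine this.congr_deriv ?_
    rw [sq, sub_zero]
  · have e2 : dfE E = fun d => E⁻¹ * (Real.log d - Real.log (d - E)) := by
      funext x; simp [dfE, hE]
    rw [e2]
    have h1 : HasDerivAt (fun d : ℝ => Real.log d) d⁻¹ d := Real.hasDerivAt_log (ne_of_gt hd0)
    have h2 : HasDerivAt (fun x : ℝ => Real.log (x - E)) (d - E)⁻¹ d := by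
      have hs : HasDerivAt (fun x : ℝ => x - E) 1 d := (hasDerivAt_id d).sub_const E
      have := (Real.hasDerivAt_log (ne_of_gt hdE)).comp d hs
      exact this.congr_deriv (mul_one _)
    have := (h1.sub h2).const_mul E⁻¹
    refine this.congr_deriv ?_
    field_simp
    ring

lemma dfE_antitoneOn (E : ℝ) : ∀ x ∈ Set.Ioi (max 0 E), ∀ y ∈ Set.Ioi (max 0 E),
    x ≤ y → dfE E y ≤ dfE E x := by
  have hanti : AntitoneOn (dfE E) (Set.Ioi (max 0 E)) := by
    apply antitoneOn_of_deriv_nonpos (convex_Ioi _)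
    · intro x hx
      exact (hasDerivAt_dfE hx).continuousAt.continuousWithinAt
    · intro x hx
      rw [interior_Ioi] at hx
      exact (hasDerivAt_dfE hx).differentiableAt.differentiableWithinAt
    · intro x hx
      rw [interior_Ioi] at hx
      rw [(hasDerivAt_dfE hx).deriv]
      obtain ⟨h1, h2⟩ := dom_fE hx
      have : (0:ℝ) < x * (x - E) := mul_pos h1 h2
      simp only [neg_nonpos]
      positivity
  intro x hx y hy hxy
  exact hanti hx hy hxy

lemma continuousOn_dfE (E : ℝ) : ContinuousOn (dfE E) (Set.Ioi (max 0 E)) :=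
  fun x hx => (hasDerivAt_dfE hx).continuousAt.continuousWithinAt

lemma fE_tangent {E x y : ℝ} (hx : max 0 E < x) (hy : max 0 E < y) :
    fE E y ≤ fE E x + dfE E x * (y - x) :=
  concave_tangent_le (convex_Ioi _) (fun z hz => hasDerivAt_fE hz)
    (continuousOn_dfE E) (dfE_antitoneOn E) hx hy

lemma hasDerivAt_Hent {r : ℝ} (h0 : 0 < r) (h1 : r < 1) :
    HasDerivAt Hent (Real.log r - Real.log (1 - r)) r := by
  have h2 : (0:ℝ) < 1 - r := by linarith
  have ha : HasDerivAt (fun r : ℝ => r * Real.log r) (Real.log r + 1) r := by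
    have := (hasDerivAt_id r).mul (Real.hasDerivAt_log (ne_of_gt h0))
    refine this.congr_deriv ?_; field_simp; simp only [id]; ring
  have hb : HasDerivAt (fun r : ℝ => (1 - r) * Real.log (1 - r)) (-(Real.log (1 - r) + 1)) r := by
    have hs : HasDerivAt (fun r : ℝ => 1 - r) (-1) r := by
      simpa using ((hasDerivAt_id r).const_sub 1)
    have h3 : HasDerivAt (fun y : ℝ => y * Real.log y) (Real.log (1 - r) + 1) (1 - r) := by
      have := (hasDerivAt_id (1-r)).mul (Real.hasDerivAt_log (ne_of_gt h2))
      refine this.congr_deriv ?_; field_simp; simp only [id]; ring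
    have := h3.comp r hs
    refine this.congr_deriv ?_
    ring
  have := ha.add hb
  refine this.congr_deriv ?_
  ring

lemma lipschitzOnWith_of_deriv_bound {f f' : ℝ → ℝ} {s : Set ℝ} (hs : Convex ℝ s)
    (hf : ∀ x ∈ s, HasDerivWithinAt f (f' x) s x) {C : ℝ} (hC : 0 ≤ C)
    (hb : ∀ x ∈ s, |f' x| ≤ C) : LipschitzOnWith C.toNNReal f s := by
  rw [lipschitzOnWith_iff_dist_le_mul]
  intro x hx y hy
  rw [Real.dist_eq, Real.dist_eq, Real.coe_toNNReal C hC]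
  have := hs.norm_image_sub_le_of_norm_hasDerivWithin_le hf
    (fun z hz => by simpa [Real.norm_eq_abs] using hb z hz) hy hx
  simpa [Real.norm_eq_abs] using this

lemma lipschitzOnWith_mul_of_bdd {f g : ℝ → ℝ} {s : Set ℝ} {Kf Kg : NNReal} {Bf Bg : ℝ}
    (hf : LipschitzOnWith Kf f s) (hg : LipschitzOnWith Kg g s)
    (hbf : ∀ x ∈ s, |f x| ≤ Bf) (hbg : ∀ x ∈ s, |g x| ≤ Bg) :
    ∃ K : NNReal, LipschitzOnWith K (fun x => f x * g x) s := by
  refine ⟨(Bf * Kg + Bg * Kf).toNNReal, ?_⟩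
  rw [lipschitzOnWith_iff_dist_le_mul]
  intro x hx y hy
  rw [Real.dist_eq, Real.dist_eq]
  have h1 : |f x - f y| ≤ Kf * |x - y| := by
    have := lipschitzOnWith_iff_dist_le_mul.1 hf x hx y hy
    simpa [Real.dist_eq] using this
  have h2 : |g x - g y| ≤ Kg * |x - y| := by
    have := lipschitzOnWith_iff_dist_le_mul.1 hg x hx y hy
    simpa [Real.dist_eq] using this
  have key : |f x * g x - f y * g y| ≤ (Bf * Kg + Bg * Kf) * |x - y| := by
    have e : f x * g x - f y * g y = f x * (g x - g y) + g y * (f x - f y) := by ring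
    rw [e]
    calc |f x * (g x - g y) + g y * (f x - f y)|
        ≤ |f x * (g x - g y)| + |g y * (f x - f y)| := abs_add_le _ _
      _ = |f x| * |g x - g y| + |g y| * |f x - f y| := by rw [abs_mul, abs_mul]
      _ ≤ Bf * (Kg * |x - y|) + Bg * (Kf * |x - y|) := by
          apply add_le_add
          · exact mul_le_mul (hbf x hx) h2 (abs_nonneg _)
              (le_trans (abs_nonneg _) (hbf x hx))
          · exact mul_le_mul (hbg y hy) h1 (abs_nonneg _)
              (le_trans (abs_nonneg _) (hbg y hy))
      _ = (Bf * Kg + Bg * Kf) * |x - y| := by ring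
  calc |f x * g x - f y * g y| ≤ (Bf * Kg + Bg * Kf) * |x - y| := key
    _ ≤ (Bf * Kg + Bg * Kf).toNNReal * |x - y| := by
        apply mul_le_mul_of_nonneg_right _ (abs_nonneg _)
        rw [Real.coe_toNNReal']
        exact le_max_left _ _

namespace memF

variable {φm φp E : ℝ} {φ d : ℝ → ℝ}

lemma phiCont (h : memF φm φp E φ d) : ContinuousOn φ (Set.Icc (-1:ℝ) 1) :=
  fun u hu => (h.1 u hu).continuousWithinAt

lemma dCont (h : memF φm φp E φ d) : ContinuousOn d (Set.Icc (-1:ℝ) 1) := by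
  obtain ⟨L, hL⟩ := h.2.1
  exact hL.continuousOn

lemma dpos (h : memF φm φp E φ d) : ∀ u ∈ Set.Icc (-1:ℝ) 1, 0 < d u :=
  fun u hu => lt_of_le_of_lt (le_max_left 0 E) (h.2.2.2.2 u hu)

lemma hasDerivAtInterior (h : memF φm φp E φ d) {u : ℝ} (hu : u ∈ Set.Ioo (-1:ℝ) 1) :
    HasDerivAt φ (d u) u :=
  (h.1 u (Set.Ioo_subset_Icc_self hu)).hasDerivAt (Icc_mem_nhds hu.1 hu.2)

lemma phi_mem (h : memF φm φp E φ d) :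
    ∀ u ∈ Set.Icc (-1:ℝ) 1, φm ≤ φ u ∧ φ u ≤ φp := by
  have hmono : MonotoneOn φ (Set.Icc (-1:ℝ) 1) := by
    apply monotoneOn_of_deriv_nonneg (convex_Icc _ _) h.phiCont
    · intro x hx
      rw [interior_Icc] at hx
      exact (h.hasDerivAtInterior hx).differentiableAt.differentiableWithinAt
    · intro x hx
      rw [interior_Icc] at hx
      rw [(h.hasDerivAtInterior hx).deriv]
      exact le_of_lt (h.dpos x (Set.Ioo_subset_Icc_self hx))
  have hm1 : (-1:ℝ) ∈ Set.Icc (-1:ℝ) 1 := by norm_num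
  have hp1 : (1:ℝ) ∈ Set.Icc (-1:ℝ) 1 := by norm_num
  intro u hu
  constructor
  · rw [← h.2.2.1]; exact hmono hm1 hu hu.1
  · rw [← h.2.2.2.1]; exact hmono hu hp1 hu.2

lemma d_range (h : memF φm φp E φ d) :
    ∃ m M : ℝ, max 0 E < m ∧ ∀ u ∈ Set.Icc (-1:ℝ) 1, d u ∈ Set.Icc m M := by
  have hne : (Set.Icc (-1:ℝ) 1).Nonempty := by norm_num
  obtain ⟨u0, hu0, hmin⟩ := isCompact_Icc.exists_isMinOn hne h.dCont
  obtain ⟨u1, hu1, hmax⟩ := isCompact_Icc.exists_isMaxOn hne h.dCont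
  exact ⟨d u0, d u1, h.2.2.2.2 u0 hu0, fun u hu => ⟨hmin hu, hmax hu⟩⟩

end memF

lemma continuousOn_fE (E : ℝ) : ContinuousOn (fE E) (Set.Ioi (max 0 E)) :=
  fun x hx => (hasDerivAt_fE hx).continuousAt.continuousWithinAt

lemma integrand_contOn {φm φp E : ℝ} (A : ℝ) {ρ ψ e : ℝ → ℝ}
    (hρc : ContinuousOn ρ (Set.Icc (-1:ℝ) 1))
    (hρ01 : ∀ u ∈ Set.Icc (-1:ℝ) 1, 0 < ρ u ∧ ρ u < 1)
    (hψ : memF φm φp E ψ e) :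
    ContinuousOn (fun u => Hent (ρ u) + kay (ρ u) (ψ u) + fE E (e u) - A)
      (Set.Icc (-1:ℝ) 1) := by
  have hρne : ∀ u ∈ Set.Icc (-1:ℝ) 1, ρ u ≠ 0 := fun u hu => ne_of_gt (hρ01 u hu).1
  have h1ρne : ∀ u ∈ Set.Icc (-1:ℝ) 1, 1 - ρ u ≠ 0 := fun u hu => by
    have := (hρ01 u hu).2; intro h; nlinarith [sub_eq_zero.1 h]
  have hH : ContinuousOn (fun u => Hent (ρ u)) (Set.Icc (-1:ℝ) 1) := by
    simp only [Hent]
    exact (hρc.mul (hρc.log hρne)).add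
      (((continuousOn_const.sub hρc)).mul ((continuousOn_const.sub hρc).log h1ρne))
  have hk : ContinuousOn (fun u => kay (ρ u) (ψ u)) (Set.Icc (-1:ℝ) 1) := by
    simp only [kay]
    apply ContinuousOn.sub
    · exact (continuousOn_const.sub hρc).mul hψ.phiCont
    · apply ContinuousOn.log
      · exact continuousOn_const.add (Real.continuous_exp.comp_continuousOn hψ.phiCont)
      · exact fun u _ => ne_of_gt (one_add_exp_pos _)
  have hf : ContinuousOn (fun u => fE E (e u)) (Set.Icc (-1:ℝ) 1) :=
    (continuousOn_fE E).comp hψ.dCont (fun u hu => hψ.2.2.2.2 u hu)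
  exact ((hH.add hk).add hf).sub continuousOn_const

lemma GEint_eq (E A : ℝ) (ρ ψ e : ℝ → ℝ) :
    GEint E A ρ ψ e = ∫ u in (-1:ℝ)..1, (Hent (ρ u) + kay (ρ u) (ψ u) + fE E (e u) - A) := by
  unfold GEint
  congr 1
  funext u
  simp only [Hent, kay, fE]
  ring

/-- Core maximality: an EL solution maximizes `GEint`. -/
lemma GE_le_of_EL {φm φp E : ℝ} (A : ℝ) {ρ φ0 d0 ψ e : ℝ → ℝ}
    (hρc : ContinuousOn ρ (Set.Icc (-1:ℝ) 1))
    (hρ01 : ∀ u ∈ Set.Icc (-1:ℝ) 1, 0 < ρ u ∧ ρ u < 1)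
    (hφ0 : memF φm φp E φ0 d0) (hEL : solvesEL E ρ φ0 d0)
    (hψ : memF φm φp E ψ e) :
    GEint E A ρ ψ e ≤ GEint E A ρ φ0 d0 := by
  have hle : (-1:ℝ) ≤ 1 := by norm_num
  have huIcc : Set.uIcc (-1:ℝ) 1 = Set.Icc (-1:ℝ) 1 := Set.uIcc_of_le hle
  have hm1 : (-1:ℝ) ∈ Set.Icc (-1:ℝ) 1 := by norm_num
  have hp1 : (1:ℝ) ∈ Set.Icc (-1:ℝ) 1 := by norm_num
  set gg : ℝ → ℝ := fun u => (1/(1 + Real.exp (φ0 u)) - ρ u) * (ψ u - φ0 u)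
      + dfE E (d0 u) * (e u - d0 u) with hgg
  have hggCont : ContinuousOn gg (Set.Icc (-1:ℝ) 1) := by
    apply ContinuousOn.add
    · apply ContinuousOn.mul _ (hψ.phiCont.sub hφ0.phiCont)
      apply ContinuousOn.sub _ hρc
      exact ContinuousOn.div continuousOn_const
        (continuousOn_const.add (Real.continuous_exp.comp_continuousOn hφ0.phiCont))
        (fun u _ => ne_of_gt (one_add_exp_pos _))
    · apply ContinuousOn.mul _ (hψ.dCont.sub hφ0.dCont)
      exact (continuousOn_dfE E).comp hφ0.dCont (fun u hu => hφ0.2.2.2.2 u hu)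
  have hggzero : ∫ u in (-1:ℝ)..1, gg u = 0 := by
    obtain ⟨L0, hL0⟩ := hφ0.2.1
    obtain ⟨m, M, hm, hrange⟩ := hφ0.d_range
    obtain ⟨hm0, hmE⟩ := dom_fE hm
    have hdfELip : LipschitzOnWith ((m * (m - E))⁻¹).toNNReal (dfE E) (Set.Icc m M) := by
      apply lipschitzOnWith_of_deriv_bound (convex_Icc m M)
        (f' := fun x => -(x * (x - E))⁻¹)
      · intro x hx
        exact (hasDerivAt_dfE (lt_of_lt_of_le hm hx.1)).hasDerivWithinAt
      · positivity
      · intro x hx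
        have hx0 : 0 < x := lt_of_lt_of_le hm0 hx.1
        have hxE : 0 < x - E := by have := hx.1; linarith
        rw [abs_neg, abs_inv, abs_of_pos (mul_pos hx0 hxE)]
        apply inv_anti₀ (mul_pos hm0 hmE)
        exact mul_le_mul hx.1 (by linarith [hx.1]) hmE.le hx0.le
    have hcomp : LipschitzOnWith (((m * (m - E))⁻¹).toNNReal * L0)
        (fun u => dfE E (d0 u)) (Set.Icc (-1:ℝ) 1) :=
      hdfELip.comp hL0 (fun u hu => hrange u hu)
    obtain ⟨Be, hBe⟩ : ∃ B : ℝ, ∀ u ∈ Set.Icc (-1:ℝ) 1, |e u - d0 u| ≤ B := by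
      obtain ⟨u1, hu1, hmax⟩ := isCompact_Icc.exists_isMaxOn
        (by norm_num : (Set.Icc (-1:ℝ) 1).Nonempty) ((hψ.dCont.sub hφ0.dCont).abs)
      exact ⟨_, fun u hu => hmax hu⟩
    have hηLip : LipschitzOnWith (max Be 0).toNNReal (fun u => ψ u - φ0 u)
        (Set.Icc (-1:ℝ) 1) := by
      apply lipschitzOnWith_of_deriv_bound (convex_Icc _ _) (f' := fun u => e u - d0 u)
      · intro x hx; exact (hψ.1 x hx).sub (hφ0.1 x hx)
      · exact le_max_right _ _
      · intro x hx; exact le_trans (hBe x hx) (le_max_left _ _)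
    obtain ⟨B1, hB1⟩ : ∃ B : ℝ, ∀ u ∈ Set.Icc (-1:ℝ) 1, |dfE E (d0 u)| ≤ B := by
      obtain ⟨u1, hu1, hmax⟩ := isCompact_Icc.exists_isMaxOn
        (by norm_num : (Set.Icc (-1:ℝ) 1).Nonempty)
        (((continuousOn_dfE E).comp hφ0.dCont (fun u hu => hφ0.2.2.2.2 u hu)).abs)
      exact ⟨_, fun u hu => hmax hu⟩
    obtain ⟨B2, hB2⟩ : ∃ B : ℝ, ∀ u ∈ Set.Icc (-1:ℝ) 1, |ψ u - φ0 u| ≤ B := by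
      obtain ⟨u1, hu1, hmax⟩ := isCompact_Icc.exists_isMaxOn
        (by norm_num : (Set.Icc (-1:ℝ) 1).Nonempty)
        ((hψ.phiCont.sub hφ0.phiCont).abs)
      exact ⟨_, fun u hu => hmax hu⟩
    obtain ⟨K, hK⟩ := lipschitzOnWith_mul_of_bdd hcomp hηLip hB1 hB2
    obtain ⟨G, hG, hEq⟩ := hK.extend_real
    have hae : ∀ᵐ u ∂(volume : Measure ℝ), u ∈ Set.Ioo (-1:ℝ) 1 → HasDerivAt G (gg u) u := by
      filter_upwards [hEL] with u hu hmem
      obtain ⟨d2, hd2, heq⟩ := hu hmem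
      have hIcc : Set.Icc (-1:ℝ) 1 ∈ 𝓝 u := Icc_mem_nhds hmem.1 hmem.2
      have hφ0' := hφ0.hasDerivAtInterior hmem
      have hψ' := hψ.hasDerivAtInterior hmem
      have humem := Set.Ioo_subset_Icc_self hmem
      have hd0dom := hφ0.2.2.2.2 u humem
      have hdf : HasDerivAt (fun x => dfE E (d0 x)) (-(d0 u * (d0 u - E))⁻¹ * d2) u :=
        (hasDerivAt_dfE hd0dom).comp u hd2
      have hF : HasDerivAt (fun x => dfE E (d0 x) * (ψ x - φ0 x))
          (-(d0 u * (d0 u - E))⁻¹ * d2 * (ψ u - φ0 u) + dfE E (d0 u) * (e u - d0 u)) u :=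
        hdf.mul (hψ'.sub hφ0')
      have hGF : G =ᶠ[𝓝 u] fun x => dfE E (d0 x) * (ψ x - φ0 x) :=
        Filter.eventuallyEq_of_mem hIcc (fun x hx => (hEq hx).symm)
      have hG' := hF.congr_of_eventuallyEq hGF
      refine hG'.congr_deriv ?_
      have hval : -(d0 u * (d0 u - E))⁻¹ * d2 = 1/(1 + Real.exp (φ0 u)) - ρ u := by
        rw [div_eq_mul_inv] at heq
        linarith
      rw [hgg]
      simp only [← hval]
    have hggm : AEStronglyMeasurable gg (volume.restrict (Set.Ioo (-1:ℝ) 1)) :=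
      (hggCont.mono Set.Ioo_subset_Icc_self).aestronglyMeasurable measurableSet_Ioo
    have hftc := lipschitz_ftc hG hle hae hggm
    have hend1 : G 1 = 0 := by
      rw [← hEq hp1]
      have h1 : ψ 1 - φ0 1 = 0 := by rw [hψ.2.2.2.1, hφ0.2.2.2.1]; ring
      simp only [h1, mul_zero]
    have hend0 : G (-1) = 0 := by
      rw [← hEq hm1]
      have h1 : ψ (-1) - φ0 (-1) = 0 := by rw [hψ.2.2.1, hφ0.2.2.1]; ring
      simp only [h1, mul_zero]
    rw [hftc, hend1, hend0]; ring
  -- now the pointwise concavity bound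
  rw [GEint_eq E A ρ ψ e, GEint_eq E A ρ φ0 d0]
  have hint1 : IntervalIntegrable (fun u => Hent (ρ u) + kay (ρ u) (ψ u) + fE E (e u) - A)
      volume (-1) 1 := by
    apply ContinuousOn.intervalIntegrable; rw [huIcc]; exact integrand_contOn A hρc hρ01 hψ
  have hint0 : IntervalIntegrable (fun u => Hent (ρ u) + kay (ρ u) (φ0 u) + fE E (d0 u) - A)
      volume (-1) 1 := by
    apply ContinuousOn.intervalIntegrable; rw [huIcc]; exact integrand_contOn A hρc hρ01 hφ0
  have hintg : IntervalIntegrable gg volume (-1) 1 := by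
    apply ContinuousOn.intervalIntegrable; rw [huIcc]; exact hggCont
  have hmono : (∫ u in (-1:ℝ)..1, (Hent (ρ u) + kay (ρ u) (ψ u) + fE E (e u) - A))
      ≤ ∫ u in (-1:ℝ)..1, ((Hent (ρ u) + kay (ρ u) (φ0 u) + fE E (d0 u) - A) + gg u) := by
    apply intervalIntegral.integral_mono_on hle hint1 (hint0.add hintg)
    intro u hu
    have ht1 := kay_tangent (ρ u) (φ0 u) (ψ u)
    have ht2 := fE_tangent (hφ0.2.2.2.2 u hu) (hψ.2.2.2.2 u hu)
    rw [hgg]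
    dsimp only
    nlinarith [ht1, ht2]
  rw [intervalIntegral.integral_add hint0 hintg, hggzero] at hmono
  linarith

lemma SE_eq_of_EL {φm φp E : ℝ} (A : ℝ) {ρ φ0 d0 : ℝ → ℝ}
    (hρc : ContinuousOn ρ (Set.Icc (-1:ℝ) 1))
    (hρ01 : ∀ u ∈ Set.Icc (-1:ℝ) 1, 0 < ρ u ∧ ρ u < 1)
    (hφ0 : memF φm φp E φ0 d0) (hEL : solvesEL E ρ φ0 d0) :
    SE φm φp E A ρ = GEint E A ρ φ0 d0 := by
  apply IsGreatest.csSup_eq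
  constructor
  · exact ⟨φ0, d0, hφ0, rfl⟩
  · rintro x ⟨ψ, e, hψ, rfl⟩
    exact GE_le_of_EL A hρc hρ01 hφ0 hEL hψ

lemma GEint_diff {φm φp E : ℝ} (A : ℝ) {ρ1 ρ2 θ e : ℝ → ℝ}
    (hρ1c : ContinuousOn ρ1 (Set.Icc (-1:ℝ) 1))
    (hρ1 : ∀ u ∈ Set.Icc (-1:ℝ) 1, 0 < ρ1 u ∧ ρ1 u < 1)
    (hρ2c : ContinuousOn ρ2 (Set.Icc (-1:ℝ) 1))
    (hρ2 : ∀ u ∈ Set.Icc (-1:ℝ) 1, 0 < ρ2 u ∧ ρ2 u < 1)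
    (hθ : memF φm φp E θ e) :
    GEint E A ρ1 θ e = GEint E A ρ2 θ e
      + ∫ u in (-1:ℝ)..1, (Hent (ρ1 u) - Hent (ρ2 u) - (ρ1 u - ρ2 u) * θ u) := by
  have hle : (-1:ℝ) ≤ 1 := by norm_num
  have huIcc : Set.uIcc (-1:ℝ) 1 = Set.Icc (-1:ℝ) 1 := Set.uIcc_of_le hle
  have hρ1ne : ∀ u ∈ Set.Icc (-1:ℝ) 1, ρ1 u ≠ 0 := fun u hu => ne_of_gt (hρ1 u hu).1
  have h1ρ1ne : ∀ u ∈ Set.Icc (-1:ℝ) 1, 1 - ρ1 u ≠ 0 := fun u hu => by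
    have := (hρ1 u hu).2; intro h; nlinarith [sub_eq_zero.1 h]
  have hρ2ne : ∀ u ∈ Set.Icc (-1:ℝ) 1, ρ2 u ≠ 0 := fun u hu => ne_of_gt (hρ2 u hu).1
  have h1ρ2ne : ∀ u ∈ Set.Icc (-1:ℝ) 1, 1 - ρ2 u ≠ 0 := fun u hu => by
    have := (hρ2 u hu).2; intro h; nlinarith [sub_eq_zero.1 h]
  have hH1 : ContinuousOn (fun u => Hent (ρ1 u)) (Set.Icc (-1:ℝ) 1) := by
    simp only [Hent]
    exact (hρ1c.mul (hρ1c.log hρ1ne)).add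
      (((continuousOn_const.sub hρ1c)).mul ((continuousOn_const.sub hρ1c).log h1ρ1ne))
  have hH2 : ContinuousOn (fun u => Hent (ρ2 u)) (Set.Icc (-1:ℝ) 1) := by
    simp only [Hent]
    exact (hρ2c.mul (hρ2c.log hρ2ne)).add
      (((continuousOn_const.sub hρ2c)).mul ((continuousOn_const.sub hρ2c).log h1ρ2ne))
  have hdc : ContinuousOn (fun u => Hent (ρ1 u) - Hent (ρ2 u) - (ρ1 u - ρ2 u) * θ u)
      (Set.Icc (-1:ℝ) 1) :=
    (hH1.sub hH2).sub ((hρ1c.sub hρ2c).mul hθ.phiCont)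
  have hint2 : IntervalIntegrable (fun u => Hent (ρ2 u) + kay (ρ2 u) (θ u) + fE E (e u) - A)
      volume (-1) 1 := by
    apply ContinuousOn.intervalIntegrable; rw [huIcc]; exact integrand_contOn A hρ2c hρ2 hθ
  have hintd : IntervalIntegrable (fun u => Hent (ρ1 u) - Hent (ρ2 u) - (ρ1 u - ρ2 u) * θ u)
      volume (-1) 1 := by
    apply ContinuousOn.intervalIntegrable; rw [huIcc]; exact hdc
  rw [GEint_eq E A ρ1 θ e, GEint_eq E A ρ2 θ e, ← intervalIntegral.integral_add hint2 hintd]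
  congr 1
  funext u
  simp only [kay]
  ring

lemma Hent_lip {ε : ℝ} (hε0 : 0 < ε) (hε1 : ε < 1/2) {x y : ℝ}
    (hx : x ∈ Set.Icc ε (1-ε)) (hy : y ∈ Set.Icc ε (1-ε)) :
    |Hent x - Hent y| ≤ (2 * (-Real.log ε)) * |x - y| := by
  have hlogε : Real.log ε < 0 := Real.log_neg hε0 (by linarith)
  have hC : (0:ℝ) ≤ 2 * (-Real.log ε) := by linarith
  have hlip : LipschitzOnWith (2 * (-Real.log ε)).toNNReal Hent (Set.Icc ε (1-ε)) := by
    apply lipschitzOnWith_of_deriv_bound (convex_Icc _ _)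
      (f' := fun r => Real.log r - Real.log (1 - r)) _ hC
    · intro r hr
      have h1 : ε ≤ r := hr.1
      have h2 : r ≤ 1 - ε := hr.2
      have hr0 : 0 < r := lt_of_lt_of_le hε0 h1
      have h1r : ε ≤ 1 - r := by linarith
      have h1r0 : 0 < 1 - r := lt_of_lt_of_le hε0 h1r
      have b1 : |Real.log r| ≤ -Real.log ε := by
        rw [abs_le]
        constructor
        · have := Real.log_le_log hε0 h1
          linarith [Real.log_le_log hε0 h1, neg_nonneg.2 hlogε.le]
        · have hr1 : r ≤ 1 := by linarith
          have := Real.log_nonpos hr0.le hr1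
          linarith
      have b2 : |Real.log (1 - r)| ≤ -Real.log ε := by
        rw [abs_le]
        constructor
        · linarith [Real.log_le_log hε0 h1r]
        · have := Real.log_nonpos h1r0.le (by linarith : (1:ℝ) - r ≤ 1)
          linarith
      calc |Real.log r - Real.log (1 - r)| ≤ |Real.log r| + |Real.log (1 - r)| := abs_sub _ _
        _ ≤ 2 * (-Real.log ε) := by linarith
    · intro r hr
      have h1 : 0 < r := lt_of_lt_of_le hε0 hr.1
      have h2 : r < 1 := lt_of_le_of_lt hr.2 (by linarith)
      exact (hasDerivAt_Hent h1 h2).hasDerivWithinAt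
  have := lipschitzOnWith_iff_dist_le_mul.1 hlip x hx y hy
  rw [Real.dist_eq, Real.dist_eq, Real.coe_toNNReal _ hC] at this
  exact this

lemma pt_rep {T : ℝ} (hT : 0 < T) {p pt : ℝ → ℝ → ℝ}
    (hsmooth : ContDiffOn ℝ (⊤ : ℕ∞) (uncurry p) (Set.Icc (0:ℝ) T ×ˢ Set.Icc (-1:ℝ) 1))
    (hπt : ∀ t ∈ Set.Icc (0:ℝ) T, ∀ u ∈ Set.Icc (-1:ℝ) 1,
      HasDerivWithinAt (fun s => p s u) (pt t u) (Set.Icc (0:ℝ) T) t) :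
    (∃ K : ℝ, 0 ≤ K ∧ ∀ t ∈ Set.Icc (0:ℝ) T, ∀ u ∈ Set.Icc (-1:ℝ) 1, |pt t u| ≤ K)
    ∧ (∀ t ∈ Set.Icc (0:ℝ) T, ContinuousOn (fun u => pt t u) (Set.Icc (-1:ℝ) 1)) := by
  set P := Set.Icc (0:ℝ) T ×ˢ Set.Icc (-1:ℝ) 1 with hP
  have hPu : UniqueDiffOn ℝ P := (uniqueDiffOn_Icc hT).prod (uniqueDiffOn_Icc (by norm_num))
  have hPc : IsCompact P := isCompact_Icc.prod isCompact_Icc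
  have hPne : P.Nonempty := ⟨(0, 0), Set.mk_mem_prod ⟨le_rfl, hT.le⟩ (by norm_num)⟩
  set F := fderivWithin ℝ (uncurry p) P with hFdef
  have hF : ContinuousOn F P := hsmooth.continuousOn_fderivWithin hPu (by simp)
  have hrep : ∀ t ∈ Set.Icc (0:ℝ) T, ∀ u ∈ Set.Icc (-1:ℝ) 1,
      pt t u = F (t, u) (1, 0) := by
    intro t ht u hu
    have hmem : (t, u) ∈ P := Set.mk_mem_prod ht hu
    have hfd : HasFDerivWithinAt (uncurry p) (F (t, u)) P (t, u) :=
      ((hsmooth.differentiableOn (by simp)) _ hmem).hasFDerivWithinAt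
    have hγ : HasDerivWithinAt (fun s : ℝ => (s, u)) ((1:ℝ), (0:ℝ)) (Set.Icc (0:ℝ) T) t :=
      ((hasDerivAt_id t).prodMk (hasDerivAt_const t u)).hasDerivWithinAt
    have hmaps : Set.MapsTo (fun s : ℝ => (s, u)) (Set.Icc (0:ℝ) T) P :=
      fun s hs => Set.mk_mem_prod hs hu
    have hcomp := hfd.comp_hasDerivWithinAt t hγ hmaps
    have heq : (uncurry p ∘ fun s : ℝ => (s, u)) = fun s => p s u := rfl
    rw [heq] at hcomp
    have hud : UniqueDiffWithinAt ℝ (Set.Icc (0:ℝ) T) t := uniqueDiffOn_Icc hT t ht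
    have h1 := (hπt t ht u hu).derivWithin hud
    have h2 := hcomp.derivWithin hud
    rw [← h1, ← h2]
  constructor
  · obtain ⟨x0, _, hmax⟩ := hPc.exists_isMaxOn hPne (hF.norm)
    refine ⟨‖F x0‖, norm_nonneg _, fun t ht u hu => ?_⟩
    rw [hrep t ht u hu]
    calc |F (t, u) (1, 0)| ≤ ‖F (t, u)‖ * ‖((1:ℝ), (0:ℝ))‖ := by
          rw [← Real.norm_eq_abs]; exact (F (t, u)).le_opNorm _
      _ ≤ ‖F x0‖ * 1 := by
          apply mul_le_mul (hmax (Set.mk_mem_prod ht hu)) _ (norm_nonneg _) (norm_nonneg _)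
          rw [Prod.norm_def]; norm_num
      _ = ‖F x0‖ := mul_one _
  · intro t ht
    have hc1 : ContinuousOn (fun u : ℝ => F (t, u)) (Set.Icc (-1:ℝ) 1) :=
      hF.comp (Continuous.continuousOn (by continuity)) (fun u hu => Set.mk_mem_prod ht hu)
    have hc2 : ContinuousOn (fun u : ℝ => F (t, u) (1, 0)) (Set.Icc (-1:ℝ) 1) := by
      have heval : Continuous (fun L : (ℝ × ℝ) →L[ℝ] ℝ => L (1, 0)) :=
        (ContinuousLinearMap.apply ℝ ℝ ((1:ℝ), (0:ℝ))).continuous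
      exact heval.comp_continuousOn hc1
    apply hc2.congr
    intro u hu
    exact hrep t ht u hu

lemma slope_tendsto_of_hasDerivAt {f : ℝ → ℝ} {c L : ℝ} (hf : HasDerivAt f L c)
    {l : Filter ℝ} (hl : l ≤ 𝓝[≠] c) :
    Tendsto (fun y => (f y - f c)/(y - c)) l (𝓝 L) := by
  have h := (hasDerivAt_iff_tendsto_slope.1 hf).mono_left hl
  exact h.congr (fun y => slope_def_field f c y)


set_option maxHeartbeats 1000000 in
/-- For a smooth path `π` bounded away from `0` and `1` with the correct boundary
values, `S_E(π_T) − S_E(π_0) = ∫₀^T ⟨Γ_t, ∂_t π_t⟩ dt` where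
`Γ_t = log(π_t/(1−π_t)) − Φ(π_t)`. -/
theorem stmt13 (ρm ρp φm φp E0 : ℝ)
    (h0 : 0 < ρm) (h1 : ρm < ρp) (h2 : ρp < 1)
    (hφm : φm = Real.log (ρm / (1 - ρm))) (hφp : φp = Real.log (ρp / (1 - ρp)))
    (hE0 : E0 = (φp - φm) / 2) (E T ε J A : ℝ) (hE : E < E0) (hT : 0 < T)
    (hε0 : 0 < ε) (hε1 : ε < 1/2)
    (hJneg : J ≤ 0) (hJeq : (1/2) * (∫ r in ρm..ρp, (E * chi r - J)⁻¹) = 1)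
    (hA : A = if E = 0 then Real.log ((ρp - ρm) / 2) + 1
      else Real.log (-J) + (1/2) * ∫ r in ρm..ρp, (E * chi r)⁻¹ * Real.log (1 - E * chi r / J))
    (p pt : ℝ → ℝ → ℝ)
    (hsmooth : ContDiffOn ℝ (⊤ : ℕ∞) (uncurry p) (Set.Icc (0:ℝ) T ×ˢ Set.Icc (-1:ℝ) 1))
    (hπt : ∀ t ∈ Set.Icc (0:ℝ) T, ∀ u ∈ Set.Icc (-1:ℝ) 1,
      HasDerivWithinAt (fun s => p s u) (pt t u) (Set.Icc (0:ℝ) T) t)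
    (hbc : ∀ t ∈ Set.Icc (0:ℝ) T, p t (-1) = ρm ∧ p t 1 = ρp)
    (hbd : ∀ t ∈ Set.Icc (0:ℝ) T, ∀ u ∈ Set.Icc (-1:ℝ) 1, ε ≤ p t u ∧ p t u ≤ 1 - ε)
    (φ dφ : ℝ → ℝ → ℝ)
    (hΦ : ∀ t ∈ Set.Icc (0:ℝ) T, memF φm φp E (φ t) (dφ t) ∧ solvesEL E (p t) (φ t) (dφ t)) :
    SE φm φp E A (p T) - SE φm φp E A (p 0) =
      ∫ t in (0:ℝ)..T, ∫ u in (-1:ℝ)..1,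
        (Real.log (p t u / (1 - p t u)) - φ t u) * pt t u := by
  have hle1 : (-1:ℝ) ≤ 1 := by norm_num
  have huIcc : Set.uIcc (-1:ℝ) 1 = Set.Icc (-1:ℝ) 1 := Set.uIcc_of_le hle1
  have huIoc : Set.uIoc (-1:ℝ) 1 = Set.Ioc (-1:ℝ) 1 := Set.uIoc_of_le hle1
  have h0T : (0:ℝ) ∈ Set.Icc (0:ℝ) T := ⟨le_rfl, hT.le⟩
  have hTT : T ∈ Set.Icc (0:ℝ) T := ⟨hT.le, le_rfl⟩
  have hpc : ∀ t ∈ Set.Icc (0:ℝ) T, ContinuousOn (fun u => p t u) (Set.Icc (-1:ℝ) 1) := by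
    intro t ht
    exact hsmooth.continuousOn.comp
      (Continuous.continuousOn (continuous_const.prodMk continuous_id))
      (fun u hu => Set.mk_mem_prod ht hu)
  have hp01 : ∀ t ∈ Set.Icc (0:ℝ) T, ∀ u ∈ Set.Icc (-1:ℝ) 1, 0 < p t u ∧ p t u < 1 := by
    intro t ht u hu
    obtain ⟨ha, hb⟩ := hbd t ht u hu
    exact ⟨lt_of_lt_of_le hε0 ha, by linarith⟩
  obtain ⟨⟨K, hK0, hKb⟩, hptc⟩ := pt_rep hT hsmooth hπt
  have hplip : ∀ u ∈ Set.Icc (-1:ℝ) 1, ∀ s ∈ Set.Icc (0:ℝ) T, ∀ t ∈ Set.Icc (0:ℝ) T,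
      |p t u - p s u| ≤ K * |t - s| := by
    intro u hu s hs t ht
    have := (convex_Icc (0:ℝ) T).norm_image_sub_le_of_norm_hasDerivWithin_le
      (f' := fun t => pt t u) (fun r hr => hπt r hr u hu)
      (fun r hr => by rw [Real.norm_eq_abs]; exact hKb r hr u hu) hs ht
    simpa [Real.norm_eq_abs] using this
  set LH : ℝ := 2 * (-Real.log ε) with hLHdef
  have hLH0 : 0 ≤ LH := by
    have : Real.log ε < 0 := Real.log_neg hε0 (by linarith)
    simp only [hLHdef]; linarith
  set Cφ : ℝ := max |φm| |φp| with hCφdef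
  have hCφ0 : 0 ≤ Cφ := le_trans (abs_nonneg φm) (le_max_left _ _)
  have hφbd : ∀ τ ∈ Set.Icc (0:ℝ) T, ∀ u ∈ Set.Icc (-1:ℝ) 1, |φ τ u| ≤ Cφ := by
    intro τ hτ u hu
    obtain ⟨hl, hr⟩ := (hΦ τ hτ).1.phi_mem u hu
    rw [abs_le]
    refine ⟨?_, ?_⟩
    · calc -Cφ ≤ -|φm| := neg_le_neg (le_max_left _ _)
        _ ≤ φm := neg_abs_le _
        _ ≤ φ τ u := hl
    · calc φ τ u ≤ φp := hr
        _ ≤ |φp| := le_abs_self _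
        _ ≤ Cφ := le_max_right _ _
  set C1 : ℝ := (LH + Cφ) * K with hC1def
  have hC10 : 0 ≤ C1 := mul_nonneg (add_nonneg hLH0 hCφ0) hK0
  have hDpoint : ∀ s ∈ Set.Icc (0:ℝ) T, ∀ t ∈ Set.Icc (0:ℝ) T, ∀ τ ∈ Set.Icc (0:ℝ) T,
      ∀ u ∈ Set.Icc (-1:ℝ) 1,
      |Hent (p t u) - Hent (p s u) - (p t u - p s u) * φ τ u| ≤ C1 * |t - s| := by
    intro s hs t ht τ hτ u hu
    have h1 : |Hent (p t u) - Hent (p s u)| ≤ LH * |p t u - p s u| :=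
      Hent_lip hε0 hε1 ⟨(hbd t ht u hu).1, (hbd t ht u hu).2⟩
        ⟨(hbd s hs u hu).1, (hbd s hs u hu).2⟩
    have h2 : |(p t u - p s u) * φ τ u| ≤ |p t u - p s u| * Cφ := by
      rw [abs_mul]; exact mul_le_mul_of_nonneg_left (hφbd τ hτ u hu) (abs_nonneg _)
    have h3 := hplip u hu s hs t ht
    calc |Hent (p t u) - Hent (p s u) - (p t u - p s u) * φ τ u|
        ≤ |Hent (p t u) - Hent (p s u)| + |(p t u - p s u) * φ τ u| := abs_sub _ _
      _ ≤ LH * (K * |t - s|) + (K * |t - s|) * Cφ := by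
          have a1 := mul_le_mul_of_nonneg_left h3 hLH0
          have a2 := mul_le_mul_of_nonneg_right h3 hCφ0
          linarith [le_trans h1 a1, le_trans h2 a2]
      _ = C1 * |t - s| := by rw [hC1def]; ring
  -- continuity of Hent ∘ p t
  have hHentCont : ∀ t ∈ Set.Icc (0:ℝ) T,
      ContinuousOn (fun u => Hent (p t u)) (Set.Icc (-1:ℝ) 1) := by
    intro t ht
    simp only [Hent]
    have hc := hpc t ht
    exact (hc.mul (hc.log (fun u hu => ne_of_gt (hp01 t ht u hu).1))).add
      ((continuousOn_const.sub hc).mul ((continuousOn_const.sub hc).log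
        (fun u hu => by have := (hp01 t ht u hu).2; intro h; nlinarith [sub_eq_zero.1 h])))
  have hDdCont : ∀ s ∈ Set.Icc (0:ℝ) T, ∀ t ∈ Set.Icc (0:ℝ) T, ∀ τ ∈ Set.Icc (0:ℝ) T,
      ContinuousOn (fun u => Hent (p t u) - Hent (p s u) - (p t u - p s u) * φ τ u)
        (Set.Icc (-1:ℝ) 1) := by
    intro s hs t ht τ hτ
    exact ((hHentCont t ht).sub (hHentCont s hs)).sub
      (((hpc t ht).sub (hpc s hs)).mul (hΦ τ hτ).1.phiCont)
  have hDdInt : ∀ s ∈ Set.Icc (0:ℝ) T, ∀ t ∈ Set.Icc (0:ℝ) T, ∀ τ ∈ Set.Icc (0:ℝ) T,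
      IntervalIntegrable (fun u => Hent (p t u) - Hent (p s u) - (p t u - p s u) * φ τ u)
        volume (-1) 1 := by
    intro s hs t ht τ hτ
    apply ContinuousOn.intervalIntegrable
    rw [huIcc]; exact hDdCont s hs t ht τ hτ
  have hDdBound : ∀ s ∈ Set.Icc (0:ℝ) T, ∀ t ∈ Set.Icc (0:ℝ) T, ∀ τ ∈ Set.Icc (0:ℝ) T,
      |∫ u in (-1:ℝ)..1, (Hent (p t u) - Hent (p s u) - (p t u - p s u) * φ τ u)|
        ≤ 2 * (C1 * |t - s|) := by
    intro s hs t ht τ hτ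
    have hb := intervalIntegral.norm_integral_le_of_norm_le_const
      (C := C1 * |t - s|)
      (f := fun u => Hent (p t u) - Hent (p s u) - (p t u - p s u) * φ τ u)
      (fun u hu => by
        rw [Real.norm_eq_abs]
        rw [huIoc] at hu
        exact hDpoint s hs t ht τ hτ u (Set.Ioc_subset_Icc_self hu))
    rw [Real.norm_eq_abs] at hb
    have : |(1:ℝ) - (-1)| = 2 := by norm_num
    rw [this] at hb
    linarith
  -- the value function S
  set S : ℝ → ℝ := fun t => GEint E A (p t) (φ t) (dφ t) with hSdef
  have hSE : ∀ t ∈ Set.Icc (0:ℝ) T, SE φm φp E A (p t) = S t := fun t ht =>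
    SE_eq_of_EL A (hpc t ht) (hp01 t ht) (hΦ t ht).1 (hΦ t ht).2
  -- the squeeze
  have hlow : ∀ s ∈ Set.Icc (0:ℝ) T, ∀ t ∈ Set.Icc (0:ℝ) T,
      S s + (∫ u in (-1:ℝ)..1, (Hent (p t u) - Hent (p s u) - (p t u - p s u) * φ s u))
        ≤ S t := by
    intro s hs t ht
    have hd1 := GEint_diff A (hpc t ht) (hp01 t ht) (hpc s hs) (hp01 s hs) (hΦ s hs).1
    have hd2 := GE_le_of_EL A (hpc t ht) (hp01 t ht) (hΦ t ht).1 (hΦ t ht).2 (hΦ s hs).1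
    have e1 : S s = GEint E A (p s) (φ s) (dφ s) := rfl
    have e2 : S t = GEint E A (p t) (φ t) (dφ t) := rfl
    rw [e1, e2]
    linarith
  have hupp : ∀ s ∈ Set.Icc (0:ℝ) T, ∀ t ∈ Set.Icc (0:ℝ) T,
      S t ≤ S s + ∫ u in (-1:ℝ)..1,
        (Hent (p t u) - Hent (p s u) - (p t u - p s u) * φ t u) := by
    intro s hs t ht
    have hd1 := GEint_diff A (hpc t ht) (hp01 t ht) (hpc s hs) (hp01 s hs) (hΦ t ht).1
    have hd2 := GE_le_of_EL A (hpc s hs) (hp01 s hs) (hΦ s hs).1 (hΦ s hs).2 (hΦ t ht).1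
    have e1 : S s = GEint E A (p s) (φ s) (dφ s) := rfl
    have e2 : S t = GEint E A (p t) (φ t) (dφ t) := rfl
    rw [e1, e2]
    linarith
  -- S is Lipschitz on [0,T]
  have hSlip : LipschitzOnWith (2 * C1).toNNReal S (Set.Icc (0:ℝ) T) := by
    rw [lipschitzOnWith_iff_dist_le_mul]
    intro x hx y hy
    rw [Real.dist_eq, Real.dist_eq, Real.coe_toNNReal _ (by linarith : (0:ℝ) ≤ 2 * C1)]
    rw [abs_le]
    have hb1 := hDdBound y hy x hx y hy
    have hb2 := hDdBound y hy x hx x hx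
    have hl1 := hlow y hy x hx
    have hu1 := hupp y hy x hx
    constructor
    · have := (abs_le.1 hb1).1
      nlinarith [mul_le_mul_of_nonneg_left (le_refl (|x - y|)) hC10]
    · have := (abs_le.1 hb2).2
      nlinarith
  obtain ⟨G, hGlip, hGeq⟩ := hSlip.extend_real
  have hmeasG : AEStronglyMeasurable (deriv G) (volume.restrict (Set.Ioo (0:ℝ) T)) :=
    (measurable_deriv G).aestronglyMeasurable.restrict
  have haeD : ∀ᵐ x ∂(volume : Measure ℝ), x ∈ Set.Ioo (0:ℝ) T →
      HasDerivAt G (deriv G x) x := by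
    filter_upwards [hGlip.ae_differentiableAt] with x hx _
    exact hx.hasDerivAt
  have hftc := lipschitz_ftc hGlip hT.le haeD hmeasG
  set R : ℝ → ℝ := fun t => ∫ u in (-1:ℝ)..1,
      (Real.log (p t u / (1 - p t u)) - φ t u) * pt t u with hRdef
  have hderivR : ∀ᵐ t ∂(volume : Measure ℝ), t ∈ Set.Ioo 0 T → deriv G t = R t := by
    filter_upwards [hGlip.ae_differentiableAt] with t hdG hmem
    have htI : t ∈ Set.Icc (0:ℝ) T := Set.Ioo_subset_Icc_self hmem
    have hG' : HasDerivAt G (deriv G t) t := hdG.hasDerivAt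
    have hkey : ∀ (l : Filter ℝ), l.IsCountablyGenerated → l ≤ 𝓝[≠] t →
        (∀ᶠ y in l, y ∈ Set.Icc (0:ℝ) T ∧ y ≠ t) →
        Tendsto (fun y => ∫ u in (-1:ℝ)..1,
          ((Hent (p y u) - Hent (p t u))/(y - t) - ((p y u - p t u)/(y - t)) * φ t u))
          l (𝓝 (R t)) := by
      intro l hcg hl hev
      letI := hcg
      apply intervalIntegral.tendsto_integral_filter_of_dominated_convergence (fun _ => C1)
      · filter_upwards [hev] with y hy
        have hcont : ContinuousOn (fun u =>
            (Hent (p y u) - Hent (p t u))/(y - t) - ((p y u - p t u)/(y - t)) * φ t u)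
            (Set.Icc (-1:ℝ) 1) :=
          ((((hHentCont y hy.1).sub (hHentCont t htI)).div_const _).sub
            ((((hpc y hy.1).sub (hpc t htI)).div_const _).mul (hΦ t htI).1.phiCont))
        have hsub : Set.uIoc (-1:ℝ) 1 ⊆ Set.Icc (-1:ℝ) 1 := by
          rw [huIoc]; exact Set.Ioc_subset_Icc_self
        exact (hcont.mono hsub).aestronglyMeasurable measurableSet_uIoc
      · filter_upwards [hev] with y hy
        filter_upwards with u hu
        rw [huIoc] at hu
        have huI := Set.Ioc_subset_Icc_self hu
        have hne : y - t ≠ 0 := sub_ne_zero.2 hy.2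
        have habs : 0 < |y - t| := abs_pos.2 hne
        have hpoint := hDpoint t htI y hy.1 t htI u huI
        have heqq : (Hent (p y u) - Hent (p t u))/(y - t) - ((p y u - p t u)/(y - t)) * φ t u
            = (Hent (p y u) - Hent (p t u) - (p y u - p t u) * φ t u)/(y - t) := by ring
        rw [Real.norm_eq_abs, heqq, abs_div, div_le_iff₀ habs]
        exact hpoint
      · exact intervalIntegrable_const
      · filter_upwards with u hu
        rw [huIoc] at hu
        have huI := Set.Ioc_subset_Icc_self hu
        have hp' : HasDerivAt (fun s => p s u) (pt t u) t :=
          (hπt t htI u huI).hasDerivAt (Icc_mem_nhds hmem.1 hmem.2)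
        obtain ⟨hq0, hq1⟩ := hp01 t htI u huI
        have hH' : HasDerivAt (fun y => Hent (p y u))
            ((Real.log (p t u) - Real.log (1 - p t u)) * pt t u) t :=
          HasDerivAt.comp (h₂ := Hent) t (hasDerivAt_Hent hq0 hq1) hp'
        have t1 := slope_tendsto_of_hasDerivAt hH' hl
        have t2 := slope_tendsto_of_hasDerivAt hp' hl
        have t3 := t1.sub (t2.mul_const (φ t u))
        convert t3 using 2
        rw [Real.log_div (ne_of_gt hq0) (ne_of_gt (by linarith : (0:ℝ) < 1 - p t u))]
        ring
    have hsubr : (𝓝[>] t) ≤ 𝓝[≠] t :=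
      nhdsWithin_mono t (fun y hy => Set.mem_compl_singleton_iff.2 (ne_of_gt hy))
    have hsubl : (𝓝[<] t) ≤ 𝓝[≠] t :=
      nhdsWithin_mono t (fun y hy => Set.mem_compl_singleton_iff.2 (ne_of_lt hy))
    have hIocmem : Set.Ioc t T ∈ 𝓝[>] t := Ioc_mem_nhdsGT hmem.2
    have hIcomem : Set.Ico 0 t ∈ 𝓝[<] t := Ico_mem_nhdsLT_of_mem ⟨hmem.1, le_rfl⟩
    have hevr : ∀ᶠ y in 𝓝[>] t, y ∈ Set.Icc (0:ℝ) T ∧ y ≠ t := by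
      filter_upwards [hIocmem] with y hy
      exact ⟨⟨le_trans hmem.1.le hy.1.le, hy.2⟩, ne_of_gt hy.1⟩
    have hevl : ∀ᶠ y in 𝓝[<] t, y ∈ Set.Icc (0:ℝ) T ∧ y ≠ t := by
      filter_upwards [hIcomem] with y hy
      exact ⟨⟨hy.1, le_trans hy.2.le hmem.2.le⟩, ne_of_lt hy.2⟩
    have hqr := hkey (𝓝[>] t) (by infer_instance) hsubr hevr
    have hql := hkey (𝓝[<] t) (by infer_instance) hsubl hevl
    have hslr : Tendsto (fun y => (G y - G t)/(y - t)) (𝓝[>] t) (𝓝 (deriv G t)) :=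
      slope_tendsto_of_hasDerivAt hG' hsubr
    have hsll : Tendsto (fun y => (G y - G t)/(y - t)) (𝓝[<] t) (𝓝 (deriv G t)) :=
      slope_tendsto_of_hasDerivAt hG' hsubl
    -- right inequality: integral quotient ≤ slope
    have hger : R t ≤ deriv G t := by
      apply le_of_tendsto_of_tendsto hqr hslr
      filter_upwards [hIocmem] with y hy
      have hyI : y ∈ Set.Icc (0:ℝ) T := ⟨le_trans hmem.1.le hy.1.le, hy.2⟩
      have hyt : t < y := hy.1
      have hne : y - t ≠ 0 := sub_ne_zero.2 (ne_of_gt hyt)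
      have hstar := hlow t htI y hyI
      rw [← hGeq hyI, ← hGeq htI]
      have hid : (∫ u in (-1:ℝ)..1,
          ((Hent (p y u) - Hent (p t u))/(y - t) - ((p y u - p t u)/(y - t)) * φ t u))
          = (∫ u in (-1:ℝ)..1,
            (Hent (p y u) - Hent (p t u) - (p y u - p t u) * φ t u)) / (y - t) := by
        rw [← intervalIntegral.integral_div]
        congr 1
        funext u
        ring
      rw [hid]
      exact (div_le_div_iff_of_pos_right (by linarith : (0:ℝ) < y - t)).2 (by linarith)
    have hlel : deriv G t ≤ R t := by
      apply le_of_tendsto_of_tendsto hsll hql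
      filter_upwards [hIcomem] with y hy
      have hyI : y ∈ Set.Icc (0:ℝ) T := ⟨hy.1, le_trans hy.2.le hmem.2.le⟩
      have hyt : y < t := hy.2
      have hne : t - y ≠ 0 := sub_ne_zero.2 (ne_of_gt hyt)
      have hne' : y - t ≠ 0 := sub_ne_zero.2 (ne_of_lt hyt)
      have hstar := hupp y hyI t htI
      rw [← hGeq hyI, ← hGeq htI]
      have hid : (∫ u in (-1:ℝ)..1,
          ((Hent (p y u) - Hent (p t u))/(y - t) - ((p y u - p t u)/(y - t)) * φ t u))
          = (∫ u in (-1:ℝ)..1,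
            (Hent (p t u) - Hent (p y u) - (p t u - p y u) * φ t u)) / (t - y) := by
        rw [← intervalIntegral.integral_div]
        congr 1
        funext u
        field_simp
        ring
      rw [hid]
      have hGS : (S y - S t)/(y - t) = (S t - S y)/(t - y) := by
        field_simp
        ring
      rw [hGS]
      exact (div_le_div_iff_of_pos_right (by linarith : (0:ℝ) < t - y)).2 (by linarith)
    exact le_antisymm hlel hger
  -- final assembly
  rw [hSE T hTT, hSE 0 h0T, hGeq hTT, hGeq h0T, ← hftc]
  apply intervalIntegral.integral_congr_ae
  rw [Set.uIoc_of_le hT.le]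
  have hTne : ∀ᵐ x ∂(volume : Measure ℝ), x ≠ T := by
    have : (volume : Measure ℝ) {T} = 0 := volume_singleton
    filter_upwards [measure_eq_zero_iff_ae_notMem.1 this] with x hx
    simpa using hx
  filter_upwards [hderivR, hTne] with x hx1 hx2 hx
  exact hx1 ⟨hx.1, lt_of_le_of_ne hx.2 hx2⟩
end
end

section
/- Let E < E₀ and let ρ : [−1,1] → ℝ be twice continuously differentiable with ρ(−1) = ρ₋, ρ(1) = ρ₊ and 0 < ρ(u) < 1 for all u. Define Γ := log(ρ/(1−ρ)) − Φ(ρ). Then ∫_{−1}^{1} χ(ρ) (Γ')² du − ∫_{−1}^{1} (ρ' − E·χ(ρ)) Γ' du = 0. -/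
open Real MeasureTheory Set Filter Topology Function

noncomputable section

/-!
With `σ := 1/(1+e^φ)`, the Euler–Lagrange equation reads `φ'' = (ρ − σ) φ'(φ' − E)`, and the
integrand `χ(ρ)Γ'² − (ρ' − Eχ(ρ))Γ' = (E − φ')ρ' + χ(ρ) φ'(φ' − E)` is then exactly the derivative
of `F := (E − φ')(ρ + σ) + φ'`. At `u = ±1` the boundary values `φ = log(ρ/(1−ρ))` give
`σ = 1 − ρ`, so `F(±1) = E` and the integral vanishes. As `φ'` is only Lipschitz, `F` is merely
absolutely continuous, which is enough for the fundamental theorem of calculus.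
-/

theorem absolutelyContinuousOnInterval_of_hasDerivWithinAt {f f' : ℝ → ℝ} {a b : ℝ}
    (hab : a ≤ b) (hf : ∀ x ∈ Icc a b, HasDerivWithinAt f (f' x) (Icc a b) x)
    (hf' : ContinuousOn f' (Icc a b)) : AbsolutelyContinuousOnInterval f a b := by
  obtain ⟨C, hC⟩ := isCompact_Icc.exists_bound_of_continuousOn hf'
  refine LipschitzOnWith.absolutelyContinuousOnInterval (K := C.toNNReal) ?_
  rw [uIcc_of_le hab]
  refine (convex_Icc a b).lipschitzOnWith_of_nnnorm_hasDerivWithin_le hf fun x hx => ?_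
  rw [← NNReal.coe_le_coe, coe_nnnorm]
  exact (hC x hx).trans (le_max_left _ _)

theorem absolutelyContinuousOnInterval_comp_of_hasDerivWithinAt {g f f' : ℝ → ℝ} {a b : ℝ}
    (hab : a ≤ b) (hg : ContDiff ℝ 1 g)
    (hf : ∀ x ∈ Icc a b, HasDerivWithinAt f (f' x) (Icc a b) x)
    (hf' : ContinuousOn f' (Icc a b)) : AbsolutelyContinuousOnInterval (g ∘ f) a b := by
  have hfc : ContinuousOn f (Icc a b) := fun x hx => (hf x hx).continuousWithinAt
  refine absolutelyContinuousOnInterval_of_hasDerivWithinAt hab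
    (fun x hx => ((hg.differentiable one_ne_zero).differentiableAt.hasDerivAt).comp_hasDerivWithinAt
      x (hf x hx)) ?_
  exact ((hg.continuous_deriv le_rfl).comp_continuousOn hfc).mul hf'

theorem AbsolutelyContinuousOnInterval.integral_eq_sub_of_ae_hasDerivAt {f f' : ℝ → ℝ}
    {a b : ℝ} (hf : AbsolutelyContinuousOnInterval f a b) (hab : a ≤ b)
    (hf' : ∀ᵐ x, x ∈ Ioo a b → HasDerivAt f (f' x) x) :
    ∫ x in a..b, f' x = f b - f a := by
  rw [← hf.integral_deriv_eq_sub]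
  refine intervalIntegral.integral_congr_ae ?_
  filter_upwards [hf', (Ioo_ae_eq_Ioc (μ := volume) (a := a) (b := b)).mem_iff] with x hx hIoo hIoc
  rw [uIoc_of_le hab] at hIoc
  exact ((hx (hIoo.2 hIoc)).deriv).symm

theorem chi_mul_sq_sub_mul_eq {r dr d E : ℝ} (hr : chi r ≠ 0) :
    chi r * (dr / chi r - d) ^ 2 - (dr - E * chi r) * (dr / chi r - d)
      = (E - d) * dr + chi r * (d * (d - E)) := by
  field_simp
  ring

theorem one_div_one_add_exp_log_div {r : ℝ} (h0 : 0 < r) (h1 : r < 1) :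
    1 / (1 + exp (log (r / (1 - r)))) = 1 - r := by
  have : 0 < 1 - r := by linarith
  rw [exp_log (by positivity)]
  field_simp
  ring

theorem hasDerivAt_potential_of_eulerLagrange {E u dρu d2 : ℝ} {ρ φ d : ℝ → ℝ}
    (hρ : HasDerivAt ρ dρu u) (hφ : HasDerivAt φ (d u) u) (hd : HasDerivAt d d2 u)
    (hne : d u * (d u - E) ≠ 0)
    (hEL : d2 / (d u * (d u - E)) + 1 / (1 + exp (φ u)) = ρ u) :
    HasDerivAt (fun x => (E - d x) * (ρ x + 1 / (1 + exp (φ x))) + d x)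
      ((E - d u) * dρu + chi (ρ u) * (d u * (d u - E))) u := by
  have hpos : 0 < 1 + exp (φ u) := by positivity
  have hσ := (hasDerivAt_const u (1 : ℝ)).div (hφ.exp.const_add 1) hpos.ne'
  have hd2 : d2 = (ρ u - 1 / (1 + exp (φ u))) * (d u * (d u - E)) := by
    rw [← hEL, add_sub_cancel_right, div_mul_cancel₀ _ hne]
  refine (((hd.const_sub E).mul (hρ.add hσ)).add hd).congr_deriv ?_
  simp only [hd2, chi, Pi.add_apply, Pi.div_apply]
  field_simp
  ring

theorem integral_eq_zero_of_solvesEL {E : ℝ} {ρ dρ φ d : ℝ → ℝ} {L : NNReal}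
    (hρ : ∀ u ∈ Icc (-1 : ℝ) 1, HasDerivWithinAt ρ (dρ u) (Icc (-1 : ℝ) 1) u)
    (hdρ : ContinuousOn dρ (Icc (-1) 1))
    (hρ01 : ∀ u ∈ Icc (-1 : ℝ) 1, 0 < ρ u ∧ ρ u < 1)
    (hφ : ∀ u ∈ Icc (-1 : ℝ) 1, HasDerivWithinAt φ (d u) (Icc (-1 : ℝ) 1) u)
    (hd : LipschitzOnWith L d (Icc (-1) 1))
    (hdE : ∀ u ∈ Icc (-1 : ℝ) 1, d u * (d u - E) ≠ 0)
    (hφl : φ (-1) = log (ρ (-1) / (1 - ρ (-1)))) (hφr : φ 1 = log (ρ 1 / (1 - ρ 1)))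
    (hEL : solvesEL E ρ φ d) :
    ∫ u in (-1 : ℝ)..1, (E - d u) * dρ u + chi (ρ u) * (d u * (d u - E)) = 0 := by
  have hab : (-1 : ℝ) ≤ 1 := by norm_num
  set F := fun x => (E - d x) * (ρ x + 1 / (1 + exp (φ x))) + d x with hFdef
  have hFac : AbsolutelyContinuousOnInterval F (-1) 1 := by
    have hdac := (uIcc_of_le hab ▸ hd).absolutelyContinuousOnInterval
    have hρac := absolutelyContinuousOnInterval_of_hasDerivWithinAt hab hρ hdρ
    have hσac := absolutelyContinuousOnInterval_comp_of_hasDerivWithinAt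
      (g := fun t => 1 / (1 + exp t)) hab
      (contDiff_const.div (contDiff_const.add contDiff_exp) fun t => by positivity)
      hφ hd.continuousOn
    exact ((((LipschitzWith.const E).lipschitzOnWith).absolutelyContinuousOnInterval.fun_sub
      hdac).fun_mul (hρac.fun_add hσac)).fun_add hdac
  have hF' : ∀ᵐ u, u ∈ Ioo (-1 : ℝ) 1 →
      HasDerivAt F ((E - d u) * dρ u + chi (ρ u) * (d u * (d u - E))) u := by
    filter_upwards [hEL] with u hu hIoo
    obtain ⟨d2, hd2, hELu⟩ := hu hIoo
    have hI := Icc_mem_nhds hIoo.1 hIoo.2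
    have hIcc := Ioo_subset_Icc_self hIoo
    exact hasDerivAt_potential_of_eulerLagrange ((hρ u hIcc).hasDerivAt hI)
      ((hφ u hIcc).hasDerivAt hI) hd2 (hdE u hIcc) hELu
  have hFE : ∀ u ∈ Icc (-1 : ℝ) 1, φ u = log (ρ u / (1 - ρ u)) → F u = E := fun u hu h => by
    simp only [hFdef, h, one_div_one_add_exp_log_div (hρ01 u hu).1 (hρ01 u hu).2]
    ring
  rw [hFac.integral_eq_sub_of_ae_hasDerivAt hab hF', hFE 1 ⟨hab, le_rfl⟩ hφr,
    hFE (-1) ⟨le_rfl, hab⟩ hφl, sub_self]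

/-- Here `dρ u / chi (ρ u) - d0 u` is `Γ'`: `log(ρ/(1−ρ))' = ρ'/χ(ρ)` and `d0 = Φ(ρ)'`. -/
theorem stmt14_general (ρm ρp φm φp : ℝ)
    (hφm : φm = Real.log (ρm / (1 - ρm))) (hφp : φp = Real.log (ρp / (1 - ρp)))
    (E : ℝ)
    (ρ dρ d2ρ : ℝ → ℝ)
    (hρ1 : ∀ u ∈ Set.Icc (-1:ℝ) 1, HasDerivWithinAt ρ (dρ u) (Set.Icc (-1:ℝ) 1) u)
    (hρ2 : ∀ u ∈ Set.Icc (-1:ℝ) 1, HasDerivWithinAt dρ (d2ρ u) (Set.Icc (-1:ℝ) 1) u)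
    (hbc : ρ (-1) = ρm ∧ ρ 1 = ρp)
    (hbd : ∀ u ∈ Set.Icc (-1:ℝ) 1, 0 < ρ u ∧ ρ u < 1)
    (φ0 d0 : ℝ → ℝ)
    (hF : memF φm φp E φ0 d0) (hEL : solvesEL E ρ φ0 d0) :
    (∫ u in (-1:ℝ)..1, chi (ρ u) * (dρ u / chi (ρ u) - d0 u)^2)
      - (∫ u in (-1:ℝ)..1, (dρ u - E * chi (ρ u)) * (dρ u / chi (ρ u) - d0 u)) = 0 := by
  obtain ⟨hφ0, ⟨L, hd0⟩, hφ0m, hφ0p, hd0E⟩ := hF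
  have hab : (-1 : ℝ) ≤ 1 := by norm_num
  have hχ : ∀ u ∈ Icc (-1 : ℝ) 1, 0 < chi (ρ u) := fun u hu =>
    mul_pos (hbd u hu).1 (sub_pos.2 (hbd u hu).2)
  have hρc : ContinuousOn ρ (Icc (-1) 1) := fun u hu => (hρ1 u hu).continuousWithinAt
  have hdρc : ContinuousOn dρ (Icc (-1) 1) := fun u hu => (hρ2 u hu).continuousWithinAt
  have hχc : ContinuousOn (fun u => chi (ρ u)) (Icc (-1) 1) :=
    hρc.mul (continuousOn_const.sub hρc)
  have hΓc : ContinuousOn (fun u => dρ u / chi (ρ u) - d0 u) (Icc (-1) 1) :=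
    (hdρc.div hχc fun u hu => (hχ u hu).ne').sub hd0.continuousOn
  have hint₁ : IntervalIntegrable (fun u => chi (ρ u) * (dρ u / chi (ρ u) - d0 u) ^ 2)
      volume (-1) 1 := (hχc.mul (hΓc.pow 2)).intervalIntegrable_of_Icc hab
  have hint₂ : IntervalIntegrable
      (fun u => (dρ u - E * chi (ρ u)) * (dρ u / chi (ρ u) - d0 u)) volume (-1) 1 :=
    ((hdρc.sub (continuousOn_const.mul hχc)).mul hΓc).intervalIntegrable_of_Icc hab
  rw [← intervalIntegral.integral_sub hint₁ hint₂,
    intervalIntegral.integral_congr fun u hu =>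
      chi_mul_sq_sub_mul_eq (E := E) (d := d0 u) (dr := dρ u) (hχ u (uIcc_of_le hab ▸ hu)).ne']
  refine integral_eq_zero_of_solvesEL hρ1 hdρc hbd hφ0 hd0 (fun u hu => ?_)
    (by rw [hφ0m, hφm, hbc.1]) (by rw [hφ0p, hφp, hbc.2]) hEL
  exact (mul_pos ((le_max_left 0 E).trans_lt (hd0E u hu))
    (sub_pos.2 ((le_max_right 0 E).trans_lt (hd0E u hu)))).ne'

/-- The Hamilton–Jacobi identity: with `Γ = log(ρ/(1−ρ)) − Φ(ρ)` (so that
`Γ' = ρ'/χ(ρ) − Φ(ρ)'`), one has `⟨χ(ρ) (Γ')²⟩ − ⟨ρ' − E χ(ρ), Γ'⟩ = 0`. -/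
theorem stmt14 (ρm ρp φm φp E0 : ℝ)
    (h0 : 0 < ρm) (h1 : ρm < ρp) (h2 : ρp < 1)
    (hφm : φm = Real.log (ρm / (1 - ρm))) (hφp : φp = Real.log (ρp / (1 - ρp)))
    (hE0 : E0 = (φp - φm) / 2) (E : ℝ) (hE : E < E0)
    (ρ dρ d2ρ : ℝ → ℝ)
    (hρ1 : ∀ u ∈ Set.Icc (-1:ℝ) 1, HasDerivWithinAt ρ (dρ u) (Set.Icc (-1:ℝ) 1) u)
    (hρ2 : ∀ u ∈ Set.Icc (-1:ℝ) 1, HasDerivWithinAt dρ (d2ρ u) (Set.Icc (-1:ℝ) 1) u)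
    (hρ2c : ContinuousOn d2ρ (Set.Icc (-1:ℝ) 1))
    (hbc : ρ (-1) = ρm ∧ ρ 1 = ρp)
    (hbd : ∀ u ∈ Set.Icc (-1:ℝ) 1, 0 < ρ u ∧ ρ u < 1)
    (φ dφ : ℝ → ℝ → ℝ) (φ0 d0 : ℝ → ℝ)
    (hF : memF φm φp E φ0 d0) (hEL : solvesEL E ρ φ0 d0) :
    (∫ u in (-1:ℝ)..1, chi (ρ u) * (dρ u / chi (ρ u) - d0 u)^2)
      - (∫ u in (-1:ℝ)..1, (dρ u - E * chi (ρ u)) * (dρ u / chi (ρ u) - d0 u)) = 0 :=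
  stmt14_general ρm ρp φm φp hφm hφp E ρ dρ d2ρ hρ1 hρ2 hbc hbd φ0 d0 hF hEL
end
end
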